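/- arXiv:2008.09183 — 11 statements merged into one kernel-verified Lean document; each statement's English description precedes it below -/
import Mathlib

section
/- Let X and Y be points in the plane at distances x ≥ R and y ≥ R from the origin O, for some fixed R > 1. Suppose X is the center of a circle of radius r_x and Y is the center of a circle of radius r_y, both circles intersect the unit circle centered at O (so x ≤ 1 + r_x and y ≤ 1 + r_y), and neither circle contains the other's center (so dist(X,Y) ≥ max(r_x, r_y)). Then the radial projections A and B of X and Y onto the circle of radius R centered at O satisfy dist(A,B) ≥ R − 1. -/
open EuclideanSpace

/-- Radial projection lemma, part (a). -/
theorem stmt_0 (R x y rx ry : ℝ) (X Y : EuclideanSpace ℝ (Fin 2))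
    (hR : 1 < R) (hX : ‖X‖ = x) (hY : ‖Y‖ = y)
    (hxR : R ≤ x) (hyR : R ≤ y)
    (hrx : 0 < rx) (hry : 0 < ry)
    (hx1 : x ≤ 1 + rx) (hy1 : y ≤ 1 + ry)
    (hXY : max rx ry ≤ dist X Y) :
    R - 1 ≤ dist ((R / ‖X‖) • X) ((R / ‖Y‖) • Y) := by
  have hR0 : (0:ℝ) < R := lt_trans one_pos hR
  have hx0 : 0 < x := lt_of_lt_of_le hR0 hxR
  have hy0 : 0 < y := lt_of_lt_of_le hR0 hyR
  have hxy : 0 < x * y := mul_pos hx0 hy0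
  rw [hX, hY]
  set t : ℝ := inner ℝ X Y with hts
  have hXY2 : dist X Y ^ 2 = x ^ 2 + y ^ 2 - 2 * t := by
    rw [dist_eq_norm, norm_sub_sq_real, hX, hY, ← hts]; ring
  have hAB2 : dist ((R / x) • X) ((R / y) • Y) ^ 2
      = (2 * R ^ 2 * (x * y) - 2 * R ^ 2 * t) / (x * y) := by
    rw [dist_eq_norm, norm_sub_sq_real, real_inner_smul_left, real_inner_smul_right,
      norm_smul, norm_smul, Real.norm_eq_abs, Real.norm_eq_abs,
      abs_of_pos (div_pos hR0 hx0), abs_of_pos (div_pos hR0 hy0), hX, hY, ← hts]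
    field_simp
    ring
  -- dist X Y bounds
  have hdx : x - 1 ≤ dist X Y := le_trans (by linarith [le_max_left rx ry]) hXY
  have hdy : y - 1 ≤ dist X Y := le_trans (by linarith [le_max_right rx ry]) hXY
  have hdx2 : (x - 1) ^ 2 ≤ x ^ 2 + y ^ 2 - 2 * t := by
    rw [← hXY2]; exact pow_le_pow_left₀ (by linarith) hdx 2
  have hdy2 : (y - 1) ^ 2 ≤ x ^ 2 + y ^ 2 - 2 * t := by
    rw [← hXY2]; exact pow_le_pow_left₀ (by linarith) hdy 2
  -- key inequality
  have key : (R - 1) ^ 2 * (x * y) ≤ 2 * R ^ 2 * (x * y) - 2 * R ^ 2 * t := by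
    have hA : 0 ≤ R * (x - 1) - (R - 1) * x := by nlinarith
    have hB : 0 ≤ R * (y - 1) - (R - 1) * y := by nlinarith
    rcases le_total y x with h | h
    · nlinarith [mul_nonneg hA hB, mul_nonneg (mul_nonneg (sq_nonneg R) (by linarith : (0:ℝ) ≤ y - 1)) (by linarith : (0:ℝ) ≤ x - y)]
    · nlinarith [mul_nonneg hA hB, mul_nonneg (mul_nonneg (sq_nonneg R) (by linarith : (0:ℝ) ≤ x - 1)) (by linarith : (0:ℝ) ≤ y - x)]
  have h2 : (R - 1) ^ 2 ≤ dist ((R / x) • X) ((R / y) • Y) ^ 2 := by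
    rw [hAB2, le_div_iff₀ hxy]; exact key
  exact le_of_pow_le_pow_left₀ two_ne_zero dist_nonneg h2
end

section
/- Let R > 1 and let X, Y be points in the plane with 1 ≤ |X| ≤ R and |Y| ≥ R. Suppose dist(X,Y) ≥ |Y| − 1. Then the distance from X to the radial projection B = R·Y/|Y| of Y onto the circle of radius R centered at the origin satisfies dist(X,B) ≥ R − 1. -/
/-! Scaling `y` by `c ∈ [0, 1]` interpolates squared distances from `x` between `‖x‖²` and
`‖x - y‖²` up to the correction `c (1 - c) ‖y‖²` (Stewart's theorem on the segment `[0, y]`).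
Bounding `‖x‖ ≥ 1` and `‖x - y‖ ≥ ‖y‖ - 1` in this identity gives `‖x - c y‖ ≥ c ‖y‖ - 1`
exactly; for the radial projection take `c = R / ‖y‖`. -/

variable {E : Type*} [NormedAddCommGroup E] [InnerProductSpace ℝ E]

theorem norm_sub_smul_sq (x y : E) (c : ℝ) :
    ‖x - c • y‖ ^ 2 = (1 - c) * ‖x‖ ^ 2 + c * ‖x - y‖ ^ 2 - c * (1 - c) * ‖y‖ ^ 2 := by
  rw [norm_sub_sq_real, norm_sub_sq_real, norm_smul, real_inner_smul_right, Real.norm_eq_abs,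
    mul_pow, sq_abs]
  ring

theorem mul_norm_sub_one_le_dist_smul {x y : E} {c : ℝ} (hc₀ : 0 ≤ c) (hc₁ : c ≤ 1)
    (hx : 1 ≤ ‖x‖) (hxy : ‖y‖ - 1 ≤ dist x y) : c * ‖y‖ - 1 ≤ dist x (c • y) := by
  rcases le_or_gt (c * ‖y‖) 1 with hcy | hcy
  · linarith [dist_nonneg (x := x) (y := c • y)]
  have hy : 0 ≤ ‖y‖ - 1 := by nlinarith [norm_nonneg y]
  have hx_sq : 1 ≤ ‖x‖ ^ 2 := one_le_pow₀ hx
  have hxy_sq : (‖y‖ - 1) ^ 2 ≤ ‖x - y‖ ^ 2 := by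
    rw [← dist_eq_norm]
    exact pow_le_pow_left₀ hy hxy 2
  refine le_of_pow_le_pow_left₀ two_ne_zero dist_nonneg ?_
  calc (c * ‖y‖ - 1) ^ 2 = (1 - c) * 1 + c * (‖y‖ - 1) ^ 2 - c * (1 - c) * ‖y‖ ^ 2 := by ring
    _ ≤ (1 - c) * ‖x‖ ^ 2 + c * ‖x - y‖ ^ 2 - c * (1 - c) * ‖y‖ ^ 2 := by gcongr
    _ = dist x (c • y) ^ 2 := by rw [dist_eq_norm, norm_sub_smul_sq]

theorem stmt_1_general (R : ℝ) (X Y : EuclideanSpace ℝ (Fin 2))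
    (hR : 1 < R) (hX1 : 1 ≤ ‖X‖) (hYR : R ≤ ‖Y‖)
    (hXY : ‖Y‖ - 1 ≤ dist X Y) :
    R - 1 ≤ dist X ((R / ‖Y‖) • Y) := by
  have hY : 0 < ‖Y‖ := by linarith
  have hc₀ : 0 ≤ R / ‖Y‖ := by positivity
  have hc₁ : R / ‖Y‖ ≤ 1 := (div_le_one hY).mpr hYR
  simpa [div_mul_cancel₀ R hY.ne'] using mul_norm_sub_one_le_dist_smul hc₀ hc₁ hX1 hXY

/-- Radial projection lemma, part (b). -/
theorem stmt_1 (R : ℝ) (X Y : EuclideanSpace ℝ (Fin 2))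
    (hR : 1 < R) (hX1 : 1 ≤ ‖X‖) (hXR : ‖X‖ ≤ R) (hYR : R ≤ ‖Y‖)
    (hXY : ‖Y‖ - 1 ≤ dist X Y) :
    R - 1 ≤ dist X ((R / ‖Y‖) • Y) :=
  stmt_1_general R X Y hR hX1 hYR hXY
end

section
/- Let 0 ≤ R − d ≤ r ≤ R and let A, B be two points in the annulus {P : r ≤ |P| ≤ R} with dist(A,B) ≥ d. Then the angle ∠AOB at the origin O satisfies ∠AOB ≥ min( arccos((R² + r² − d²)/(2Rr)), 2·arcsin(d/(2R)) ). -/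
/-!
With `a = ‖A‖`, `b = ‖B‖` and `θ = ∠AOB`, the law of cosines and `dist A B ≥ d` give
`cos θ ≤ (a² + b² - d²) / (2ab)`. For fixed `b` this bound has the form `(a + c / a) / (2b)`,
which on an interval is maximised at an endpoint; so over the square `[r, R]²` it is at most
its value at `(R, r)` or at `(R, R)` (the corner `(r, r)` is dominated by `(R, R)`).
These two values are the cosines of the two angles of the claim, the second one being
`cos (2 arcsin (d / 2R)) = 1 - d² / 2R²`.
-/

open Real InnerProductGeometry

/-- The cosine of the angle between the sides `x` and `y` of a triangle whose third side
is `√D`. -/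
noncomputable def triangleCos (D x y : ℝ) : ℝ := (x ^ 2 + y ^ 2 - D) / (2 * x * y)

lemma triangleCos_comm (D x y : ℝ) : triangleCos D x y = triangleCos D y x := by
  unfold triangleCos; ring_nf

lemma add_div_le_max_of_mem_Icc {r R a c : ℝ} (hr : 0 < r) (hra : r ≤ a) (haR : a ≤ R) :
    a + c / a ≤ max (r + c / r) (R + c / R) := by
  have ha : 0 < a := hr.trans_le hra
  rcases le_or_gt c (a * R) with hc | hc
  · refine le_max_of_le_right ?_
    have hR : 0 < R := ha.trans_le haR
    have gap : R + c / R - (a + c / a) = (R - a) * (a * R - c) / (a * R) := by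
      field_simp; ring
    have gap_nonneg : 0 ≤ (R - a) * (a * R - c) / (a * R) := by
      apply div_nonneg _ (by positivity)
      exact mul_nonneg (by linarith) (by linarith)
    linarith
  · refine le_max_of_le_left ?_
    have gap : a + c / a - (r + c / r) = (a - r) * (a * r - c) / (a * r) := by
      field_simp; ring
    have gap_nonpos : (a - r) * (a * r - c) / (a * r) ≤ 0 := by
      apply div_nonpos_of_nonpos_of_nonneg _ (by positivity)
      exact mul_nonpos_of_nonneg_of_nonpos (by linarith) (by nlinarith)
    linarith

lemma triangleCos_le_max_left {D r R x y : ℝ} (hr : 0 < r) (hrx : r ≤ x) (hxR : x ≤ R)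
    (hy : 0 < y) : triangleCos D x y ≤ max (triangleCos D r y) (triangleCos D R y) := by
  have hR : 0 < R := hr.trans_le (hrx.trans hxR)
  have hx : 0 < x := hr.trans_le hrx
  have key (t : ℝ) (ht : 0 < t) : triangleCos D t y = (t + (y ^ 2 - D) / t) / (2 * y) := by
    unfold triangleCos; field_simp; ring
  rw [key x hx, key r hr, key R hR, max_div_div_right (by positivity)]
  gcongr
  exact add_div_le_max_of_mem_Icc hr hrx hxR

lemma triangleCos_le_max {D r R x y : ℝ} (hr : 0 < r) (hD : 0 ≤ D) (hrx : r ≤ x) (hxR : x ≤ R)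
    (hry : r ≤ y) (hyR : y ≤ R) :
    triangleCos D x y ≤ max (triangleCos D R r) (triangleCos D R R) := by
  have hR : 0 < R := hr.trans_le (hrx.trans hxR)
  have hy : 0 < y := hr.trans_le hry
  have corner : triangleCos D r r ≤ triangleCos D R R := by
    have hrR : r ≤ R := hrx.trans hxR
    unfold triangleCos
    rw [div_le_div_iff₀ (by positivity) (by positivity)]
    nlinarith [mul_le_mul hrR hrR hr.le hR.le]
  have left_edge : triangleCos D r y ≤ max (triangleCos D R r) (triangleCos D R R) := by
    rw [triangleCos_comm D r y]
    exact (triangleCos_le_max_left hr hry hyR hr).trans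
      (max_le (corner.trans (le_max_right _ _)) (le_max_left _ _))
  have right_edge : triangleCos D R y ≤ max (triangleCos D R r) (triangleCos D R R) := by
    rw [triangleCos_comm D R y, triangleCos_comm D R r, triangleCos_comm D R R]
    exact triangleCos_le_max_left hr hry hyR hR
  exact (triangleCos_le_max_left hr hrx hxR hy).trans (max_le left_edge right_edge)

lemma triangleCos_self_eq {R : ℝ} (d : ℝ) (hR : R ≠ 0) :
    triangleCos (d ^ 2) R R = 1 - 2 * (d / (2 * R)) ^ 2 := by
  unfold triangleCos; field_simp; ring

section InnerProductSpace

variable {V : Type*} [NormedAddCommGroup V] [InnerProductSpace ℝ V]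

lemma cos_angle_le_triangleCos {x y : V} {d : ℝ} (hx : x ≠ 0) (hy : y ≠ 0) (hd : 0 ≤ d)
    (hxy : d ≤ ‖x - y‖) : cos (angle x y) ≤ triangleCos (d ^ 2) ‖x‖ ‖y‖ := by
  have hx' : 0 < ‖x‖ := norm_pos_iff.2 hx
  have hy' : 0 < ‖y‖ := norm_pos_iff.2 hy
  have law_of_cos : ‖x - y‖ ^ 2 = ‖x‖ ^ 2 - 2 * inner ℝ x y + ‖y‖ ^ 2 := norm_sub_sq_real x y
  have hd2 : d ^ 2 ≤ ‖x - y‖ ^ 2 := pow_le_pow_left₀ hd hxy 2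
  rw [cos_angle, triangleCos, div_le_div_iff₀ (by positivity) (by positivity)]
  nlinarith [mul_pos hx' hy']

lemma arccos_le_angle {x y : V} {c : ℝ} (h : cos (angle x y) ≤ c) : arccos c ≤ angle x y := by
  simpa [arccos_cos (angle_nonneg x y) (angle_le_pi x y)] using arccos_le_arccos h

end InnerProductSpace

lemma arccos_one_sub_two_mul_sq {x : ℝ} (hx₀ : 0 ≤ x) (hx₁ : x ≤ 1) :
    arccos (1 - 2 * x ^ 2) = 2 * arcsin x := by
  have h₀ : 0 ≤ 2 * arcsin x := by have := arcsin_nonneg.2 hx₀; linarith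
  have h₁ : 2 * arcsin x ≤ π := by have := arcsin_le_pi_div_two x; linarith
  rw [← arccos_cos h₀ h₁, cos_two_mul_eq_one_sub, sin_arcsin (by linarith) hx₁]

theorem stmt_2_general (r R d : ℝ) (A B : EuclideanSpace ℝ (Fin 2))
    (hr : 0 < r)
    (hA : r ≤ ‖A‖) (hA' : ‖A‖ ≤ R) (hB : r ≤ ‖B‖) (hB' : ‖B‖ ≤ R)
    (hAB : d ≤ dist A B) :
    min (Real.arccos ((R ^ 2 + r ^ 2 - d ^ 2) / (2 * R * r)))
        (2 * Real.arcsin (d / (2 * R))) ≤ InnerProductGeometry.angle A B := by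
  have hR : 0 < R := hr.trans_le (hA.trans hA')
  rcases le_or_gt d 0 with hd | hd
  · have : arcsin (d / (2 * R)) ≤ 0 :=
      arcsin_nonpos.2 (div_nonpos_of_nonpos_of_nonneg hd (by positivity))
    exact (min_le_right _ _).trans (by linarith [angle_nonneg A B])
  have hcos : cos (angle A B) ≤ max (triangleCos (d ^ 2) R r) (triangleCos (d ^ 2) R R) :=
    (cos_angle_le_triangleCos (norm_pos_iff.1 (hr.trans_le hA)) (norm_pos_iff.1 (hr.trans_le hB))
      hd.le (dist_eq_norm A B ▸ hAB)).trans
      (triangleCos_le_max hr (sq_nonneg d) hA hA' hB hB')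
  rcases le_max_iff.1 hcos with hcos | hcos
  · exact (min_le_left _ _).trans (arccos_le_angle hcos)
  · have hd2R : d ≤ 2 * R := by
      linarith [hAB.trans (dist_eq_norm A B ▸ norm_sub_le A B)]
    rw [triangleCos_self_eq d hR.ne'] at hcos
    rw [← arccos_one_sub_two_mul_sq (by positivity) ((div_le_one (by positivity)).2 hd2R)]
    exact (min_le_right _ _).trans (arccos_le_angle hcos)

/-- Bateman–Erdős/Soss annulus angle lemma. -/
theorem stmt_2 (r R d : ℝ) (A B : EuclideanSpace ℝ (Fin 2))
    (hr : 0 < r) (hrR : r ≤ R) (hRd : 0 ≤ R - d) (hdr : R - d ≤ r) (hd2R : d ≤ 2 * R)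
    (hA : r ≤ ‖A‖) (hA' : ‖A‖ ≤ R) (hB : r ≤ ‖B‖) (hB' : ‖B‖ ≤ R)
    (hAB : d ≤ dist A B) :
    min (Real.arccos ((R ^ 2 + r ^ 2 - d ^ 2) / (2 * R * r)))
        (2 * Real.arcsin (d / (2 * R))) ≤ InnerProductGeometry.angle A B :=
  stmt_2_general r R d A B hr hA hA' hB hB' hAB
end

section
/- Let p = 1.409. It is impossible to have 12 distinct points in the annulus {P : p ≤ |P| ≤ 1 + p} in the plane such that any two of them are at distance at least p from each other. -/
/-!
Two points of the annulus `p ≤ ‖P‖ ≤ 1 + p` at distance at least `p` subtend an angle greater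
than `π / 6` at the origin: by the law of cosines this amounts to `r² + s² - √3 r s < p²` for
radii `r, s ∈ [p, 1 + p]`, which holds because `1 + p < √3 p`. Twelve directions pairwise more
than `2π / 12` apart do not fit around the circle.
-/

open Real
open scoped InnerProductSpace

lemma sq_add_mul_add_neg_of_mem_Icc {a b x c d : ℝ} (hx : x ∈ Set.Icc a b)
    (ha : a ^ 2 + c * a + d < 0) (hb : b ^ 2 + c * b + d < 0) : x ^ 2 + c * x + d < 0 := by
  obtain ⟨hax, hxb⟩ := hx
  rcases hax.eq_or_lt with rfl | hax
  · exact ha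
  nlinarith [mul_pos (sub_pos.2 hax) (neg_pos.2 hb), mul_nonneg (sub_nonneg.2 hxb) (neg_pos.2 ha).le,
    mul_nonneg (sub_nonneg.2 hax.le) (sub_nonneg.2 hxb)]

/-- The form is a monic quadratic in each variable, so it suffices to check the corners of the
square; the corner `(p, q)` is the one that needs `q < √3 p`. -/
lemma sq_add_sq_sub_sqrt_three_mul_lt {p q r s : ℝ} (hp : 0 < p) (hq : q < √3 * p)
    (hr : r ∈ Set.Icc p q) (hs : s ∈ Set.Icc p q) : r ^ 2 + s ^ 2 - √3 * (r * s) < p ^ 2 := by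
  have hsqrt3 : √3 ^ 2 = 3 := sq_sqrt (by norm_num)
  have hsqrt3_gt : 5 / 3 < √3 := by rw [lt_sqrt] <;> norm_num
  have hpq : p ≤ q := hr.1.trans hr.2
  have at_p : p ^ 2 + -(√3 * r) * p + (r ^ 2 - p ^ 2) < 0 := by
    nlinarith [mul_pos (hp.trans_le hr.1) (sub_pos.2 (hr.2.trans_lt hq))]
  have at_q : r ^ 2 + -(√3 * q) * r + (q ^ 2 - p ^ 2) < 0 :=
    sq_add_mul_add_neg_of_mem_Icc hr (by nlinarith) (by nlinarith)
  have := sq_add_mul_add_neg_of_mem_Icc (c := -(√3 * r)) (d := r ^ 2 - p ^ 2) hs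
    (by linarith) (by linarith)
  linarith

lemma real_inner_lt_sqrt_three_div_two_mul {E : Type*} [NormedAddCommGroup E]
    [InnerProductSpace ℝ E] {p q : ℝ} {x y : E} (hp : 0 < p) (hq : q < √3 * p)
    (hx : ‖x‖ ∈ Set.Icc p q) (hy : ‖y‖ ∈ Set.Icc p q) (hxy : p ≤ ‖x - y‖) :
    ⟪x, y⟫_ℝ < √3 / 2 * (‖x‖ * ‖y‖) := by
  have hsub : p ^ 2 ≤ ‖x - y‖ ^ 2 := pow_le_pow_left₀ hp.le hxy 2
  rw [norm_sub_sq_real] at hsub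
  linarith [sq_add_sq_sub_sqrt_three_mul_lt hp hq hx hy]

lemma Complex.inner_eq_norm_mul_norm_mul_cos_arg_sub (z w : ℂ) :
    ⟪z, w⟫_ℝ = ‖z‖ * ‖w‖ * Real.cos (arg z - arg w) := by
  rw [Complex.inner, Real.cos_sub]
  simp only [Complex.mul_re, Complex.conj_re, Complex.conj_im]
  rw [← norm_mul_cos_arg z, ← norm_mul_cos_arg w, ← norm_mul_sin_arg z, ← norm_mul_sin_arg w]
  ring

lemma lt_of_cos_lt_cos_of_le_pi {x y : ℝ} (hx : 0 ≤ x) (hy : y ≤ π) (h : cos x < cos y) :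
    y < x :=
  lt_of_not_ge fun hxy => (cos_le_cos_of_nonneg_of_le_pi hx hy hxy).not_gt h

lemma exists_ne_cos_le_cos_sub_of_monotone {m : ℕ} (hm : 0 < m) {θ : Fin (m + 1) → ℝ}
    (hθ : Monotone θ) (hspan : θ (Fin.last m) - θ 0 < 2 * π) :
    ∃ i j, i ≠ j ∧ cos (2 * π / (m + 1)) ≤ cos (θ i - θ j) := by
  set δ := 2 * π / (m + 1)
  by_contra! h
  have hmδ : m * δ = 2 * π - δ := by simp only [δ]; field_simp; ring
  have hδ : δ ≤ π := by
    rw [div_le_iff₀ (by positivity)]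
    nlinarith [pi_pos, (show (1 : ℝ) ≤ m by exact_mod_cast hm)]
  have hstep (k : Fin m) : θ k.castSucc + δ ≤ θ k.succ := by
    have hlt : k.castSucc < k.succ := Fin.castSucc_lt_succ
    have := lt_of_cos_lt_cos_of_le_pi (sub_nonneg.2 (hθ hlt.le)) hδ (h _ _ hlt.ne')
    linarith
  have hchain (k : Fin (m + 1)) : θ 0 + k * δ ≤ θ k := by
    induction k using Fin.induction with
    | zero => simp
    | succ k ih =>
      push_cast [Fin.val_succ, Fin.val_castSucc] at ih ⊢
      linarith [hstep k]
  have hwrap : δ < 2 * π - (θ (Fin.last m) - θ 0) := by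
    refine lt_of_cos_lt_cos_of_le_pi (by linarith) hδ ?_
    rw [cos_two_pi_sub]
    exact h _ _ (by simp [Fin.ext_iff, hm.ne'])
  have hlast := hchain (Fin.last m)
  rw [Fin.val_last] at hlast
  linarith

lemma exists_ne_cos_le_cos_sub {m : ℕ} (hm : 0 < m) (θ : Fin (m + 1) → ℝ)
    (hθ : ∀ i j, θ i - θ j < 2 * π) :
    ∃ i j, i ≠ j ∧ cos (2 * π / (m + 1)) ≤ cos (θ i - θ j) := by
  obtain ⟨i, j, hij, h⟩ :=
    exists_ne_cos_le_cos_sub_of_monotone hm (Tuple.monotone_sort θ) (hθ _ _)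
  exact ⟨_, _, (Tuple.sort θ).injective.ne hij, h⟩

/-- No 12 points of weight 1 in the annulus p ≤ ρ ≤ 1+p, with p = 1.409. -/
theorem stmt_3 :
    ¬ ∃ X : Fin 12 → EuclideanSpace ℝ (Fin 2),
      Function.Injective X ∧
      (∀ i, (1.409 : ℝ) ≤ ‖X i‖ ∧ ‖X i‖ ≤ 1 + 1.409) ∧
      (∀ i j, i ≠ j → (1.409 : ℝ) ≤ dist (X i) (X j)) := by
  rintro ⟨X, -, hnorm, hdist⟩
  let e := Complex.orthonormalBasisOneI.repr.symm
  obtain ⟨i, j, hij, hcos⟩ := exists_ne_cos_le_cos_sub (m := 11) (by norm_num)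
    (fun i => Complex.arg (e (X i)))
    (fun i j => by linarith [Complex.arg_le_pi (e (X i)), Complex.neg_pi_lt_arg (e (X j))])
  have h12 : 2 * π / ((11 : ℕ) + 1) = π / 6 := by norm_num; ring
  rw [h12, cos_pi_div_six] at hcos
  have hratio : 1 + 1.409 < √3 * 1.409 := by
    rw [← div_lt_iff₀ (by norm_num), lt_sqrt (by norm_num)]
    norm_num
  have hlt := real_inner_lt_sqrt_three_div_two_mul (by norm_num) hratio (hnorm i) (hnorm j)
    (dist_eq_norm (X i) (X j) ▸ hdist i j hij)
  rw [← e.inner_map_map, Complex.inner_eq_norm_mul_norm_mul_cos_arg_sub, e.norm_map, e.norm_map]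
    at hlt
  linarith [mul_le_mul_of_nonneg_left hcos (by positivity : 0 ≤ ‖X i‖ * ‖X j‖)]
end

section
/- Let q > 0 and 1 ≤ r < 1.25. It is impossible to have 11 distinct points in the annulus {P : 1 ≤ |P| ≤ 1.25} with pairwise distances at least q = 1/1.409, because the minimal angular separation Φ_q(1, 1.25) at the origin between any two such points exceeds 360°/11. Formally: if X₁, …, X₁₁ are points with 1 ≤ |Xᵢ| ≤ 1.25 and dist(Xᵢ, Xⱼ) ≥ 1/1.409 for i ≠ j, a contradiction follows. -/
/-!
Two points of the annulus `1 ≤ ‖P‖ ≤ 1.25` at distance at least `q = 1/1.409` subtend an angle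
at the origin whose cosine is at most `0.8389 < cos (2π/11)` (law of cosines). Sorting the
arguments of eleven such points, consecutive gaps and the wrap-around gap would each exceed
`2π/11`, so the gaps would add up to more than `2π`.
-/

open Real

/- `0.8389` rounds up `1 - q² / (2 · 1.25²)`, the maximum of `(a² + b² - q²) / (2ab)` on the square,
attained at `a = b = 1.25`. -/
theorem sq_add_sq_sub_sq_le_of_mem_Icc {a b : ℝ} (ha : a ∈ Set.Icc (1 : ℝ) 1.25)
    (hb : b ∈ Set.Icc (1 : ℝ) 1.25) :
    a ^ 2 + b ^ 2 - (1 / 1.409) ^ 2 ≤ 2 * 0.8389 * (a * b) := by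
  obtain ⟨ha₁, ha₂⟩ := ha
  obtain ⟨hb₁, hb₂⟩ := hb
  nlinarith [mul_nonneg (sub_nonneg.2 ha₂) (sub_nonneg.2 hb₂),
    mul_nonneg (sub_nonneg.2 ha₁) (sub_nonneg.2 hb₁),
    mul_nonneg (sub_nonneg.2 ha₂) (sub_nonneg.2 hb₁),
    mul_nonneg (sub_nonneg.2 ha₁) (sub_nonneg.2 hb₂), sq_nonneg (a - b)]

theorem real_inner_le_of_mem_annulus {E : Type*} [NormedAddCommGroup E] [InnerProductSpace ℝ E]
    {x y : E} (hx : ‖x‖ ∈ Set.Icc (1 : ℝ) 1.25) (hy : ‖y‖ ∈ Set.Icc (1 : ℝ) 1.25)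
    (hxy : 1 / 1.409 ≤ dist x y) :
    inner ℝ x y ≤ 0.8389 * (‖x‖ * ‖y‖) := by
  have hsq : (1 / 1.409 : ℝ) ^ 2 ≤ ‖x - y‖ ^ 2 := by
    rw [← dist_eq_norm]; gcongr
  rw [norm_sub_sq_real] at hsq
  linarith [sq_add_sq_sub_sq_le_of_mem_Icc hx hy]

theorem Complex.real_inner_eq_norm_mul_norm_mul_cos_arg_sub (z w : ℂ) :
    inner ℝ z w = ‖z‖ * ‖w‖ * Real.cos (arg z - arg w) := by
  rw [Complex.inner, Complex.mul_re, Complex.conj_re, Complex.conj_im, Real.cos_sub,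
    ← norm_mul_cos_arg z, ← norm_mul_cos_arg w, ← norm_mul_sin_arg z, ← norm_mul_sin_arg w]
  ring

theorem Real.le_abs_and_abs_le_two_pi_sub_of_cos_le {t α : ℝ} (ht : |t| < 2 * π) (hα : α ≤ π)
    (h : cos t ≤ cos α) : α ≤ |t| ∧ |t| ≤ 2 * π - α := by
  rw [← cos_abs] at h
  constructor
  · by_contra! hlt
    exact h.not_gt (cos_lt_cos_of_nonneg_of_le_pi (abs_nonneg t) hα hlt)
  · by_contra! hlt
    have hwrap : cos (2 * π - |t|) = cos |t| := by rw [cos_two_pi_sub]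
    exact h.not_gt (hwrap ▸ cos_lt_cos_of_nonneg_of_le_pi (by linarith) hα (by linarith))

theorem Fin.add_mul_le_of_forall_add_le_succ {n : ℕ} {g : Fin (n + 1) → ℝ} {α : ℝ}
    (h : ∀ k : Fin n, g k.castSucc + α ≤ g k.succ) (k : Fin (n + 1)) :
    g 0 + k * α ≤ g k := by
  induction k using Fin.induction with
  | zero => simp
  | succ k ih =>
    have hk := h k
    simp only [Fin.val_succ, Fin.val_castSucc, Nat.cast_succ] at ih ⊢
    linarith

theorem mul_le_two_pi_of_circular_separation {n : ℕ} {θ : Fin (n + 2) → ℝ} {α : ℝ}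
    (h : ∀ i j, i ≠ j → α ≤ |θ i - θ j| ∧ |θ i - θ j| ≤ 2 * π - α) :
    (n + 2) * α ≤ 2 * π := by
  set σ := Tuple.sort θ
  have hmono : Monotone (θ ∘ σ) := Tuple.monotone_sort θ
  have gap_of_lt {i j : Fin (n + 2)} (hij : i < j) :
      α ≤ θ (σ j) - θ (σ i) ∧ θ (σ j) - θ (σ i) ≤ 2 * π - α := by
    have hle : θ (σ i) ≤ θ (σ j) := hmono hij.le
    rw [← abs_of_nonneg (sub_nonneg.2 hle)]
    exact h _ _ (σ.injective.ne hij.ne')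
  have hchain := Fin.add_mul_le_of_forall_add_le_succ (g := θ ∘ σ) (α := α)
    (fun k => by simpa only [Function.comp_apply] using
      (le_sub_iff_add_le'.1 (gap_of_lt k.castSucc_lt_succ).1)) (Fin.last (n + 1))
  have hwrap := (gap_of_lt (Fin.last_pos : (0 : Fin (n + 2)) < Fin.last (n + 1))).2
  simp only [Function.comp_apply, Fin.val_last, Nat.cast_add, Nat.cast_one] at hchain hwrap
  linarith

theorem mul_le_two_pi_of_cos_sub_le {n : ℕ} {θ : Fin (n + 2) → ℝ} {α : ℝ}
    (hθ : ∀ i, θ i ∈ Set.Ioc (-π) π) (hα : α ≤ π)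
    (h : ∀ i j, i ≠ j → cos (θ i - θ j) ≤ cos α) :
    (n + 2) * α ≤ 2 * π :=
  mul_le_two_pi_of_circular_separation fun i j hij => by
    obtain ⟨hi₁, hi₂⟩ := hθ i
    obtain ⟨hj₁, hj₂⟩ := hθ j
    exact le_abs_and_abs_le_two_pi_sub_of_cos_le
      (abs_sub_lt_iff.2 ⟨by linarith, by linarith⟩) hα (h i j hij)

theorem Complex.cos_arg_sub_le_of_mem_annulus {z w : ℂ} (hz : ‖z‖ ∈ Set.Icc (1 : ℝ) 1.25)
    (hw : ‖w‖ ∈ Set.Icc (1 : ℝ) 1.25) (hzw : 1 / 1.409 ≤ dist z w) :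
    Real.cos (arg z - arg w) ≤ 0.8389 := by
  have hinner := real_inner_le_of_mem_annulus hz hw hzw
  rw [real_inner_eq_norm_mul_norm_mul_cos_arg_sub, mul_comm (0.8389 : ℝ)] at hinner
  exact le_of_mul_le_mul_left hinner (mul_pos (by linarith [hz.1]) (by linarith [hw.1]))

theorem two_pi_div_eleven_lt_arccos : 2 * π / 11 < arccos 0.8389 := by
  have hcos : (0.8389 : ℝ) < cos (2 * π / 11) := by
    have h1 : (0.9591 : ℝ) ≤ cos (π / 11) := by
      have hx₀ : 0 ≤ π / 11 := by positivity
      have hx₁ : π / 11 ≤ 0.2857 := by linarith [pi_lt_d6]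
      nlinarith [one_sub_sq_div_two_le_cos (x := π / 11)]
    rw [show 2 * π / 11 = 2 * (π / 11) by ring, cos_two_mul]
    nlinarith
  rw [← arccos_cos (by positivity) (by linarith [pi_pos] : 2 * π / 11 ≤ π)]
  exact arccos_lt_arccos (by norm_num) hcos (cos_le_one _)

/-- No 11 points with pairwise distances ≥ q = 1/1.409 in the annulus 1 ≤ ρ ≤ 1.25. -/
theorem stmt_5 :
    ¬ ∃ X : Fin 11 → EuclideanSpace ℝ (Fin 2),
      Function.Injective X ∧
      (∀ i, (1 : ℝ) ≤ ‖X i‖ ∧ ‖X i‖ ≤ 1.25) ∧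
      (∀ i j, i ≠ j → (1 / 1.409 : ℝ) ≤ dist (X i) (X j)) := by
  rintro ⟨X, -, hnorm, hdist⟩
  let z i := Complex.orthonormalBasisOneI.repr.symm (X i)
  have hcos : ∀ i j, i ≠ j → cos ((z i).arg - (z j).arg) ≤ cos (arccos 0.8389) := by
    intro i j hij
    rw [cos_arccos (by norm_num) (by norm_num)]
    simp only [z]
    apply Complex.cos_arg_sub_le_of_mem_annulus <;>
      simp only [LinearIsometryEquiv.norm_map, LinearIsometryEquiv.dist_map]
    exacts [hnorm i, hnorm j, hdist i j hij]
  have h11 := mul_le_two_pi_of_cos_sub_le (n := 9)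
    (fun i => ⟨Complex.neg_pi_lt_arg _, Complex.arg_le_pi _⟩) (arccos_le_pi _) hcos
  linarith [two_pi_div_eleven_lt_arccos]
end

section
/- With q = 1/1.409, one cannot place 12 points in the annulus {P : 1 ≤ |P| ≤ 1.32} of the Euclidean plane with pairwise distances at least q. (The minimal pairwise angle at the origin is Φ_q(1,1.32) ≈ 31.18°, and 12 · Φ_q(1,1.32) > 360°.) -/
/-!
Identify the plane with `ℂ`. By the law of cosines, two points with radii in `[1, 1.32]` at
distance at least `1/1.409` have `cos (arg z - arg w) < √3/2`, so their arguments are more than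
`π/6` apart on the circle. Sorting the twelve arguments, the eleven consecutive gaps and the
wrap-around gap each exceed `π/6`, yet they add up to `2π`.
-/

open Real ComplexConjugate

lemma exists_ne_succ_mul_le_sub_of_separated {n : ℕ} {α : ℝ} (θ : Fin (n + 2) → ℝ)
    (hsep : ∀ i j, i ≠ j → α ≤ |θ i - θ j|) :
    ∃ i j, i ≠ j ∧ (n + 1) * α ≤ θ j - θ i := by
  set σ := Tuple.sort θ
  have hmono : Monotone (θ ∘ σ) := Tuple.monotone_sort θ
  have hstep : ∀ k : Fin (n + 2), (k : ℕ) * α ≤ θ (σ k) - θ (σ 0) := by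
    refine Fin.induction (by simp) fun k ih => ?_
    have hgap : α ≤ θ (σ k.succ) - θ (σ k.castSucc) := by
      have hne : σ k.succ ≠ σ k.castSucc := σ.injective.ne (Fin.castSucc_lt_succ (i := k)).ne'
      have hle : θ (σ k.castSucc) ≤ θ (σ k.succ) := hmono (Fin.castSucc_le_succ k)
      simpa [abs_of_nonneg (sub_nonneg.2 hle)] using hsep _ _ hne
    rw [Fin.val_castSucc] at ih
    push_cast [Fin.val_succ]
    linarith
  refine ⟨σ 0, σ (Fin.last (n + 1)), σ.injective.ne (Fin.last_pos).ne, ?_⟩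
  simpa using hstep (Fin.last (n + 1))

lemma mul_lt_two_pi_of_circular_separated {n : ℕ} {α : ℝ} (θ : Fin (n + 2) → ℝ)
    (hsep : ∀ i j, i ≠ j → α < |θ i - θ j| ∧ |θ i - θ j| < 2 * π - α) :
    (n + 2) * α < 2 * π := by
  obtain ⟨i, j, hij, hspan⟩ :=
    exists_ne_succ_mul_le_sub_of_separated θ fun i j h => (hsep i j h).1.le
  have hwrap := (hsep j i hij.symm).2
  linarith [le_abs_self (θ j - θ i)]

lemma lt_abs_and_abs_lt_two_pi_sub_of_cos_lt {x α : ℝ} (hαπ : α ≤ π)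
    (hx : |x| < 2 * π) (hcos : cos x < cos α) : α < |x| ∧ |x| < 2 * π - α := by
  rw [← cos_abs] at hcos
  constructor
  · by_contra! h
    exact hcos.not_ge (cos_le_cos_of_nonneg_of_le_pi (abs_nonneg x) hαπ h)
  · by_contra! h
    rw [← cos_two_pi_sub] at hcos
    exact hcos.not_ge (cos_le_cos_of_nonneg_of_le_pi (by linarith) hαπ (by linarith))

lemma Complex.re_mul_conj_eq_norm_mul_norm_mul_cos_arg_sub {z w : ℂ} (hz : z ≠ 0) (hw : w ≠ 0) :
    (z * conj w).re = ‖z‖ * ‖w‖ * Real.cos (z.arg - w.arg) := by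
  have hz' : ‖z‖ ≠ 0 := norm_ne_zero_iff.2 hz
  have hw' : ‖w‖ ≠ 0 := norm_ne_zero_iff.2 hw
  rw [Real.cos_sub, cos_arg hz, cos_arg hw, sin_arg, sin_arg]
  simp only [mul_re, conj_re, conj_im]
  field_simp
  ring

lemma Complex.norm_sub_sq_eq_cos_arg_sub {z w : ℂ} (hz : z ≠ 0) (hw : w ≠ 0) :
    ‖z - w‖ ^ 2 = ‖z‖ ^ 2 + ‖w‖ ^ 2 - 2 * (‖z‖ * ‖w‖ * Real.cos (z.arg - w.arg)) := by
  simp only [Complex.sq_norm, normSq_sub, re_mul_conj_eq_norm_mul_norm_mul_cos_arg_sub hz hw]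

lemma lt_cos_pi_div_six_of_annulus {a b c : ℝ} (ha : 1 ≤ a) (ha' : a ≤ 1.32) (hb : 1 ≤ b)
    (hb' : b ≤ 1.32) (h : (1 / 1.409 : ℝ) ^ 2 ≤ a ^ 2 + b ^ 2 - 2 * (a * b * c)) :
    c < cos (π / 6) := by
  have hsqrt : (1.732 : ℝ) < √3 := by
    rw [lt_sqrt (by norm_num)]
    norm_num
  have hab : 1 ≤ a * b := by nlinarith
  -- `(a² + b² - 1/1.409²) / (2ab)` is at most `≈ 0.8555` on the box, attained at `a = b = 1.32`.
  have hc : c ≤ 0.866 := by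
    nlinarith [mul_nonneg (sub_nonneg.2 ha) (sub_nonneg.2 hb),
      mul_nonneg (sub_nonneg.2 ha') (sub_nonneg.2 hb'),
      mul_nonneg (sub_nonneg.2 ha) (sub_nonneg.2 hb'),
      mul_nonneg (sub_nonneg.2 hb) (sub_nonneg.2 ha')]
  rw [cos_pi_div_six]
  linarith

lemma Complex.pi_div_six_lt_abs_arg_sub_of_annulus {z w : ℂ} (hz : 1 ≤ ‖z‖ ∧ ‖z‖ ≤ 1.32)
    (hw : 1 ≤ ‖w‖ ∧ ‖w‖ ≤ 1.32) (hzw : (1 / 1.409 : ℝ) ≤ ‖z - w‖) :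
    π / 6 < |z.arg - w.arg| ∧ |z.arg - w.arg| < 2 * π - π / 6 := by
  have hz0 : z ≠ 0 := norm_pos_iff.1 (by linarith)
  have hw0 : w ≠ 0 := norm_pos_iff.1 (by linarith)
  have hcos : Real.cos (z.arg - w.arg) < Real.cos (π / 6) := by
    refine lt_cos_pi_div_six_of_annulus hz.1 hz.2 hw.1 hw.2 ?_
    rw [← norm_sub_sq_eq_cos_arg_sub hz0 hw0]
    gcongr
  have harg : |z.arg - w.arg| < 2 * π := by
    rw [abs_lt]
    constructor <;> linarith [neg_pi_lt_arg z, arg_le_pi z, neg_pi_lt_arg w, arg_le_pi w]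
  exact lt_abs_and_abs_lt_two_pi_sub_of_cos_lt (by linarith [pi_pos]) harg hcos

/-- No 12 points with pairwise distances ≥ q = 1/1.409 in the annulus 1 ≤ ρ ≤ 1.32. -/
theorem stmt_6 :
    ¬ ∃ X : Fin 12 → EuclideanSpace ℝ (Fin 2),
      Function.Injective X ∧
      (∀ i, (1 : ℝ) ≤ ‖X i‖ ∧ ‖X i‖ ≤ 1.32) ∧
      (∀ i j, i ≠ j → (1 / 1.409 : ℝ) ≤ dist (X i) (X j)) := by
  rintro ⟨X, -, hnorm, hdist⟩
  let e := Complex.orthonormalBasisOneI.repr.symm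
  have hsep : ∀ i j, i ≠ j → π / 6 < |(e (X i)).arg - (e (X j)).arg| ∧
      |(e (X i)).arg - (e (X j)).arg| < 2 * π - π / 6 := fun i j hij =>
    Complex.pi_div_six_lt_abs_arg_sub_of_annulus (by simpa using hnorm i) (by simpa using hnorm j)
      (by simpa [← dist_eq_norm] using hdist i j hij)
  have := mul_lt_two_pi_of_circular_separated (n := 10) _ hsep
  norm_num at this
  linarith
end

section
/- Let p = 1.409 and q = 1/p. There is no configuration of points X₁, …, X₈ and Y in the plane such that 1 ≤ |Xᵢ| ≤ 1.2 for all i, at least 7 of the Xᵢ satisfy |Xᵢ| ≤ 1.12, p ≤ |Y| ≤ 1.5, the pairwise distances between the Xᵢ are at least q, and the distance from Y to each Xᵢ is at least p. -/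
open Real

set_option maxHeartbeats 1000000


private lemma sin_ub {x : ℝ} (hx0 : 0 ≤ x) (hx1 : x ≤ 1) :
    Real.sin x ≤ x - x^3/6 + x^4 * (5/96) := by
  have h := Real.sin_bound (x := x) (by rwa [abs_of_nonneg hx0])
  rw [abs_of_nonneg hx0] at h
  have := (abs_le.mp h).2
  nlinarith [pow_nonneg hx0 4, mul_le_mul_of_nonneg_left hx1 (pow_nonneg hx0 4)]

private lemma cosA : (0.8252:ℝ) ≤ Real.cos 0.597 := by
  have hs : Real.sin 0.2985 ≤ 0.29449 := by
    have := sin_ub (x := 0.2985) (by norm_num) (by norm_num)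
    nlinarith
  have hs0 : (0:ℝ) ≤ Real.sin 0.2985 :=
    Real.sin_nonneg_of_nonneg_of_le_pi (by norm_num)
      (by nlinarith [Real.pi_gt_d6])
  have h1 := Real.cos_two_mul (0.2985:ℝ)
  have h2 := Real.sin_sq_add_cos_sq (0.2985:ℝ)
  have he : (2:ℝ) * 0.2985 = 0.597 := by norm_num
  rw [he] at h1
  nlinarith

private lemma cosB : (0.4736:ℝ) ≤ Real.cos 1.0735 := by
  have hs : Real.sin 0.268375 ≤ 0.265424 := by
    have := sin_ub (x := 0.268375) (by norm_num) (by norm_num)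
    nlinarith
  have hs0 : (0:ℝ) ≤ Real.sin 0.268375 :=
    Real.sin_nonneg_of_nonneg_of_le_pi (by norm_num)
      (by nlinarith [Real.pi_gt_d6])
  have h1 := Real.cos_two_mul (0.268375:ℝ)
  have h2 := Real.sin_sq_add_cos_sq (0.268375:ℝ)
  have he : (2:ℝ) * 0.268375 = 0.53675 := by norm_num
  rw [he] at h1
  have hhalf : (0.8591:ℝ) ≤ Real.cos 0.53675 := by nlinarith
  have h3 := Real.cos_two_mul (0.53675:ℝ)
  have he2 : (2:ℝ) * 0.53675 = 1.0735 := by norm_num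
  rw [he2] at h3
  nlinarith



private lemma endgame (θ : Fin 8 → ℝ)
    (hlo : ∀ i, -π < θ i) (hhi : ∀ i, θ i ≤ π)
    (h1 : ∀ i, Real.cos (θ i) ≤ 0.4736)
    (h2 : ∀ i j, i ≠ j → Real.cos (θ i - θ j) ≤ 0.8252) : False := by
  have pi_lb := Real.pi_gt_d6
  have pi_ub := Real.pi_lt_d6
  set ψ : Fin 8 → ℝ := fun i => if θ i < 0 then θ i + 2*π else θ i with hψdef
  have habs : ∀ i, (1.0735:ℝ) ≤ |θ i| := by
    intro i
    by_contra h
    push_neg at h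
    have h3 : Real.cos 1.0735 < Real.cos |θ i| :=
      Real.cos_lt_cos_of_nonneg_of_le_pi (abs_nonneg _) (by linarith) h
    rw [Real.cos_abs] at h3
    linarith [h1 i, cosB]
  have hψb : ∀ i, 1.0735 ≤ ψ i ∧ ψ i ≤ 2*π - 1.0735 := by
    intro i
    have hai := habs i
    simp only [hψdef]
    split_ifs with h
    · rcases abs_cases (θ i) with ⟨ha, _⟩ | ⟨ha, _⟩
      · constructor <;> linarith
      · constructor <;> [linarith [hlo i]; linarith]
    · push_neg at h
      rw [abs_of_nonneg h] at hai
      constructor <;> [linarith; linarith [hhi i]]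
  have hcosd : ∀ i j, i ≠ j → Real.cos (ψ i - ψ j) ≤ 0.8252 := by
    intro i j hij
    simp only [hψdef]
    split_ifs with ha hb hb
    · have e : θ i + 2*π - (θ j + 2*π) = θ i - θ j := by ring
      rw [e]; exact h2 i j hij
    · have e : θ i + 2*π - θ j = θ i - θ j + 2*π := by ring
      rw [e, Real.cos_add_two_pi]; exact h2 i j hij
    · have e : θ i - (θ j + 2*π) = θ i - θ j - 2*π := by ring
      rw [e, Real.cos_sub_two_pi]; exact h2 i j hij
    · exact h2 i j hij
  obtain ⟨i, _, j, _, hij, hfij⟩ :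
      ∃ i ∈ Finset.univ, ∃ j ∈ Finset.univ, i ≠ j ∧
        (⌊(ψ i - 1.0735)/0.591⌋) = ⌊(ψ j - 1.0735)/0.591⌋ := by
    apply Finset.exists_ne_map_eq_of_card_lt_of_maps_to
      (s := (Finset.univ : Finset (Fin 8))) (t := Finset.Ico (0:ℤ) 7)
    · simp
    · intro k _
      rw [Finset.mem_coe, Finset.mem_Ico]
      beta_reduce
      obtain ⟨hk1, hk2⟩ := hψb k
      constructor
      · apply Int.floor_nonneg.mpr
        apply div_nonneg (by linarith) (by norm_num)
      · rw [Int.floor_lt]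
        push_cast
        rw [div_lt_iff₀ (by norm_num)]
        nlinarith
  have hclose : |ψ i - ψ j| < 0.591 := by
    have hi1 := Int.floor_le ((ψ i - 1.0735)/0.591)
    have hi2 := Int.lt_floor_add_one ((ψ i - 1.0735)/0.591)
    have hj1 := Int.floor_le ((ψ j - 1.0735)/0.591)
    have hj2 := Int.lt_floor_add_one ((ψ j - 1.0735)/0.591)
    rw [hfij] at hi1 hi2
    have d1 : (ψ i - ψ j)/0.591 < 1 := by
      have : (ψ i - 1.0735)/0.591 - (ψ j - 1.0735)/0.591 = (ψ i - ψ j)/0.591 := by ring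
      linarith
    have d2 : (ψ j - ψ i)/0.591 < 1 := by
      have : (ψ j - 1.0735)/0.591 - (ψ i - 1.0735)/0.591 = (ψ j - ψ i)/0.591 := by ring
      linarith
    rw [div_lt_one (by norm_num)] at d1 d2
    rw [abs_lt]
    constructor <;> linarith
  have h3 : Real.cos 0.597 < Real.cos |ψ i - ψ j| :=
    Real.cos_lt_cos_of_nonneg_of_le_pi (abs_nonneg _) (by linarith)
      (by linarith [hclose])
  rw [Real.cos_abs] at h3
  linarith [hcosd i j hij, cosA]


/-- Impossible: one point Y with p ≤ |Y| ≤ 1.5 and eight points Xᵢ with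
1 ≤ |Xᵢ| ≤ 1.2, seven of them with |Xᵢ| ≤ 1.12, pairwise X-distances ≥ q = 1/p
and dist(Y, Xᵢ) ≥ p = 1.409. -/
theorem stmt_8 (Y : EuclideanSpace ℝ (Fin 2)) (X : Fin 8 → EuclideanSpace ℝ (Fin 2))
    (hY : (1.409 : ℝ) ≤ ‖Y‖ ∧ ‖Y‖ ≤ 1.5)
    (hX : ∀ i, (1 : ℝ) ≤ ‖X i‖ ∧ ‖X i‖ ≤ 1.2)
    (hS : ∃ S : Finset (Fin 8), 7 ≤ S.card ∧ ∀ i ∈ S, ‖X i‖ ≤ 1.12)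
    (hXX : ∀ i j, i ≠ j → (1 / 1.409 : ℝ) ≤ dist (X i) (X j))
    (hYX : ∀ i, (1.409 : ℝ) ≤ dist Y (X i)) : False := by
  obtain ⟨hY1, hY2⟩ := hY
  -- squared-norm formulas
  have hnsq : ∀ u : EuclideanSpace ℝ (Fin 2), ‖u‖^2 = u 0^2 + u 1^2 := by
    intro u
    rw [EuclideanSpace.norm_eq, Fin.sum_univ_two, Real.sq_sqrt (by positivity)]
    simp [sq_abs]
  have hdsq : ∀ u v : EuclideanSpace ℝ (Fin 2),
      dist u v ^ 2 = (u 0 - v 0)^2 + (u 1 - v 1)^2 := by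
    intro u v
    rw [EuclideanSpace.dist_eq, Fin.sum_univ_two, Real.sq_sqrt (by positivity)]
    simp [Real.dist_eq, sq_abs]
  -- complex points
  set z : Fin 8 → ℂ := fun i =>
    ⟨X i 0 * Y 0 + X i 1 * Y 1, X i 1 * Y 0 - X i 0 * Y 1⟩ with hzdef
  have habsz : ∀ i, ‖z i‖ = ‖X i‖ * ‖Y‖ := by
    intro i
    rw [Complex.norm_def, hzdef]
    have : Complex.normSq ⟨X i 0 * Y 0 + X i 1 * Y 1, X i 1 * Y 0 - X i 0 * Y 1⟩
        = (X i 0^2 + X i 1^2) * (Y 0^2 + Y 1^2) := by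
      rw [Complex.normSq_mk]; ring
    rw [this, ← hnsq, ← hnsq, Real.sqrt_mul (by positivity),
      Real.sqrt_sq (norm_nonneg _), Real.sqrt_sq (norm_nonneg _)]
  have hz0 : ∀ i, z i ≠ 0 := by
    intro i h
    have := habsz i
    rw [h, norm_zero] at this
    have h1 := (hX i).1
    nlinarith
  set θ : Fin 8 → ℝ := fun i => Complex.arg (z i) with hθdef
  have hcos : ∀ i, Real.cos (θ i) = (X i 0 * Y 0 + X i 1 * Y 1) / (‖X i‖ * ‖Y‖) := by
    intro i
    rw [hθdef]
    rw [Complex.cos_arg (hz0 i), habsz i]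
  have hsin : ∀ i, Real.sin (θ i) = (X i 1 * Y 0 - X i 0 * Y 1) / (‖X i‖ * ‖Y‖) := by
    intro i
    rw [hθdef]
    rw [Complex.sin_arg, habsz i]
  -- bound on cos θ i
  have h1 : ∀ i, Real.cos (θ i) ≤ 0.4736 := by
    intro i
    have hd := hYX i
    have hd2 : (1.409:ℝ)^2 ≤ dist Y (X i) ^ 2 := by nlinarith [dist_nonneg (x := Y) (y := X i)]
    rw [hdsq] at hd2
    have hE : X i 0 * Y 0 + X i 1 * Y 1
        ≤ (‖Y‖^2 + ‖X i‖^2 - 1.409^2) / 2 := by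
      rw [hnsq, hnsq]; nlinarith
    have hb1 := (hX i).1; have hb2 := (hX i).2
    have hEb : X i 0 * Y 0 + X i 1 * Y 1 ≤ 0.4736 * (‖X i‖ * ‖Y‖) := by
      nlinarith [mul_nonneg (sub_nonneg.mpr hY2) (sub_nonneg.mpr hb2),
        mul_nonneg (sub_nonneg.mpr hY2) (sub_nonneg.mpr hb1),
        mul_nonneg (sub_nonneg.mpr hY1) (sub_nonneg.mpr hb2),
        mul_nonneg (sub_nonneg.mpr hY1) (sub_nonneg.mpr hb1),
        mul_nonneg (sub_nonneg.mpr hY2) (sub_nonneg.mpr hY1),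
        mul_nonneg (sub_nonneg.mpr hb2) (sub_nonneg.mpr hb1)]
    rw [hcos i]
    rw [div_le_iff₀ (by nlinarith)]
    linarith [hEb]
  -- bound on cos (θ i - θ j)
  have h2 : ∀ i j, i ≠ j → Real.cos (θ i - θ j) ≤ 0.8252 := by
    intro i j hij
    have hd := hXX i j hij
    have hq : (0.5037:ℝ) ≤ dist (X i) (X j) ^ 2 := by
      have h0 : (0:ℝ) ≤ dist (X i) (X j) := dist_nonneg
      nlinarith
    rw [hdsq] at hq
    have hbi1 := (hX i).1; have hbi2 := (hX i).2
    have hbj1 := (hX j).1; have hbj2 := (hX j).2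
    have hYpos : (0:ℝ) < ‖Y‖ := by linarith
    have hXipos : (0:ℝ) < ‖X i‖ := by linarith
    have hXjpos : (0:ℝ) < ‖X j‖ := by linarith
    have hF : X i 0 * X j 0 + X i 1 * X j 1
        ≤ (‖X i‖^2 + ‖X j‖^2 - 0.5037) / 2 := by
      rw [hnsq, hnsq]; nlinarith
    have hFb : X i 0 * X j 0 + X i 1 * X j 1 ≤ 0.8252 * (‖X i‖ * ‖X j‖) := by
      nlinarith [mul_nonneg (sub_nonneg.mpr hbi2) (sub_nonneg.mpr hbj2),
        mul_nonneg (sub_nonneg.mpr hbi2) (sub_nonneg.mpr hbj1),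
        mul_nonneg (sub_nonneg.mpr hbi1) (sub_nonneg.mpr hbj2),
        mul_nonneg (sub_nonneg.mpr hbi1) (sub_nonneg.mpr hbj1),
        mul_nonneg (sub_nonneg.mpr hbi2) (sub_nonneg.mpr hbi1),
        mul_nonneg (sub_nonneg.mpr hbj2) (sub_nonneg.mpr hbj1)]
    rw [Real.cos_sub, hcos i, hcos j, hsin i, hsin j]
    have key : (X i 0 * Y 0 + X i 1 * Y 1) / (‖X i‖ * ‖Y‖) * ((X j 0 * Y 0 + X j 1 * Y 1) / (‖X j‖ * ‖Y‖))
        + (X i 1 * Y 0 - X i 0 * Y 1) / (‖X i‖ * ‖Y‖) * ((X j 1 * Y 0 - X j 0 * Y 1) / (‖X j‖ * ‖Y‖))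
        = (X i 0 * X j 0 + X i 1 * X j 1) / (‖X i‖ * ‖X j‖) := by
      have hY2' : Y 0^2 + Y 1^2 = ‖Y‖^2 := (hnsq Y).symm
      rw [div_mul_div_comm, div_mul_div_comm, ← add_div,
        div_eq_div_iff (mul_pos (mul_pos hXipos hYpos) (mul_pos hXjpos hYpos)).ne'
          (mul_pos hXipos hXjpos).ne']
      linear_combination (X i 0 * X j 0 + X i 1 * X j 1) * (‖X i‖ * ‖X j‖) * hY2'
    rw [key]
    rw [div_le_iff₀ (by positivity)]
    linarith [hFb]
  exact endgame θ (fun i => Complex.neg_pi_lt_arg (z i)) (fun i => Complex.arg_le_pi (z i)) h1 h2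
end

section
/- Let p = 1.409, q = 1/p. There is no configuration consisting of one point Y with p ≤ |Y| ≤ 1.88 and nine points X₁, …, X₉ with 1 ≤ |Xᵢ| ≤ 1.21, such that dist(Xᵢ, Xⱼ) ≥ q for all i ≠ j and dist(Y, Xᵢ) ≥ p for all i. -/
/-! Seen from the origin, each `Xᵢ` makes an angle of at least `0.8` with `Y` and any two `Xᵢ`
make an angle of at least `0.5865` with each other: by the law of cosines the cosines of these
angles are at most `0.68 = 1 - 0.8² / 2` and `0.828 ≤ 1 - 0.5865² / 2`. Going once around the
circle starting from the direction of `Y`, nine such directions need a total angle of at least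
`2 · 0.8 + 8 · 0.5865 = 6.292 > 2π`. -/

open Real InnerProductGeometry

theorem Real.Angle.exists_mem_Ico_coe_eq (θ : Real.Angle) :
    ∃ s ∈ Set.Ico 0 (2 * π), (s : Real.Angle) = θ := by
  refine ⟨_, by simpa using toIcoMod_mem_Ico two_pi_pos 0 θ.toReal, ?_⟩
  rw [Real.Angle.coe_toIcoMod, Real.Angle.coe_toReal]

theorem Real.le_and_le_two_pi_sub_of_cos_le {s α : ℝ} (hα : α ≤ π) (hs₀ : 0 ≤ s)
    (hs : s ≤ 2 * π) (h : cos s ≤ cos α) : α ≤ s ∧ s ≤ 2 * π - α := by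
  constructor
  · by_contra! hlt
    linarith [cos_lt_cos_of_nonneg_of_le_pi hs₀ hα hlt]
  · by_contra! hlt
    have := cos_lt_cos_of_nonneg_of_le_pi (x := 2 * π - s) (by linarith) hα (by linarith)
    rw [cos_two_pi_sub] at this
    linarith

theorem Fin.add_mul_le_of_pairwise_le_abs_sub {n : ℕ} {s : Fin (n + 1) → ℝ} {a b δ : ℝ}
    (hs : ∀ i, a ≤ s i ∧ s i ≤ b) (hsep : Pairwise fun i j => δ ≤ |s i - s j|) :
    a + n * δ ≤ b := by
  set g := s ∘ Tuple.sort s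
  have hstep : ∀ k : Fin n, g k.castSucc + δ ≤ g k.succ := by
    intro k
    have hle : g k.castSucc ≤ g k.succ := Tuple.monotone_sort s k.castSucc_lt_succ.le
    have hne : Tuple.sort s k.castSucc ≠ Tuple.sort s k.succ :=
      (Tuple.sort s).injective.ne k.castSucc_lt_succ.ne
    have : δ ≤ |g k.castSucc - g k.succ| := hsep hne
    rw [abs_sub_comm, abs_of_nonneg (sub_nonneg.2 hle)] at this
    linarith
  have hclimb : ∀ k : Fin (n + 1), g 0 + k * δ ≤ g k := by
    intro k
    induction k using Fin.induction with
    | zero => simp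
    | succ k ih =>
      simp only [Fin.val_succ, Nat.cast_add, Nat.cast_one, Fin.val_castSucc] at ih ⊢
      linarith [hstep k]
  have := hclimb (Fin.last n)
  simp only [Fin.val_last] at this
  linarith [(hs (Tuple.sort s 0)).1, (hs (Tuple.sort s (Fin.last n))).2,
    show g 0 = s (Tuple.sort s 0) from rfl,
    show g (Fin.last n) = s (Tuple.sort s (Fin.last n)) from rfl]

section InnerProductSpace

variable {V : Type*} [NormedAddCommGroup V] [InnerProductSpace ℝ V]

theorem InnerProductGeometry.cos_angle_le_of_le_norm_sub {x y : V} {d : ℝ} (hx : x ≠ 0)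
    (hy : y ≠ 0) (hd : 0 ≤ d) (h : d ≤ ‖x - y‖) :
    cos (angle x y) ≤ (‖x‖ ^ 2 + ‖y‖ ^ 2 - d ^ 2) / (2 * ‖x‖ * ‖y‖) := by
  have hpos : 0 < 2 * ‖x‖ * ‖y‖ := by positivity
  rw [le_div_iff₀ hpos]
  have := norm_sub_sq_eq_norm_sq_add_norm_sq_sub_two_mul_norm_mul_norm_mul_cos_angle x y
  nlinarith [pow_le_pow_left₀ hd h 2]

theorem two_mul_add_mul_le_two_pi_of_cos_angle_le [Fact (Module.finrank ℝ V = 2)] {n : ℕ}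
    {y : V} {x : Fin (n + 1) → V} {α β : ℝ} (hy : y ≠ 0) (hx : ∀ i, x i ≠ 0) (hα : α ≤ π)
    (hβ : β ≤ π)
    (hyx : ∀ i, cos (angle y (x i)) ≤ cos α)
    (hxx : Pairwise fun i j => cos (angle (x i) (x j)) ≤ cos β) :
    2 * α + n * β ≤ 2 * π := by
  have : FiniteDimensional ℝ V := .of_fact_finrank_eq_succ 1
  let o : Orientation ℝ V (Fin 2) := (Module.finBasisOfFinrankEq ℝ V Fact.out).orientation
  choose s hs_mem hs using fun i => (o.oangle y (x i)).exists_mem_Ico_coe_eq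
  have hbounds : ∀ i, α ≤ s i ∧ s i ≤ 2 * π - α := by
    intro i
    refine Real.le_and_le_two_pi_sub_of_cos_le hα (hs_mem i).1 (hs_mem i).2.le ?_
    rw [← Real.Angle.cos_coe, hs, o.cos_oangle_eq_cos_angle hy (hx i)]
    exact hyx i
  have hsep : Pairwise fun i j => β ≤ |s i - s j| := by
    intro i j hij
    have hcos : cos |s i - s j| = cos (angle (x j) (x i)) := by
      rw [cos_abs, ← Real.Angle.cos_coe, Real.Angle.coe_sub, hs, hs,
        o.oangle_sub_left hy (hx j) (hx i), o.cos_oangle_eq_cos_angle (hx j) (hx i)]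
    refine (Real.le_and_le_two_pi_sub_of_cos_le hβ (abs_nonneg _) ?_ ?_).1
    · obtain ⟨⟨hi₀, hi⟩, ⟨hj₀, hj⟩⟩ := And.intro (hs_mem i) (hs_mem j)
      rw [abs_le]; constructor <;> linarith
    · rw [hcos]; exact hxx hij.symm
  linarith [Fin.add_mul_le_of_pairwise_le_abs_sub hbounds hsep]

end InnerProductSpace

theorem cosine_bound_Y_X {ρ r : ℝ} (hρ : 1.409 ≤ ρ ∧ ρ ≤ 1.88) (hr : 1 ≤ r ∧ r ≤ 1.21) :
    (ρ ^ 2 + r ^ 2 - 1.409 ^ 2) / (2 * ρ * r) ≤ 1 - 0.8 ^ 2 / 2 := by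
  obtain ⟨hρ₁, hρ₂⟩ := hρ
  obtain ⟨hr₁, hr₂⟩ := hr
  rw [div_le_iff₀ (by positivity)]
  nlinarith [mul_nonneg (sub_nonneg.2 hρ₁) (sub_nonneg.2 hρ₂),
    mul_nonneg (sub_nonneg.2 hr₁) (sub_nonneg.2 hr₂),
    mul_nonneg (sub_nonneg.2 hρ₂) (sub_nonneg.2 hr₁),
    mul_nonneg (sub_nonneg.2 hρ₁) (sub_nonneg.2 hr₂),
    mul_nonneg (sub_nonneg.2 hρ₁) (sub_nonneg.2 hr₁),
    mul_nonneg (sub_nonneg.2 hρ₂) (sub_nonneg.2 hr₂)]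

theorem cosine_bound_X_X {r r' : ℝ} (hr : 1 ≤ r ∧ r ≤ 1.21) (hr' : 1 ≤ r' ∧ r' ≤ 1.21) :
    (r ^ 2 + r' ^ 2 - (1 / 1.409) ^ 2) / (2 * r * r') ≤ 1 - 0.5865 ^ 2 / 2 := by
  obtain ⟨hr₁, hr₂⟩ := hr
  obtain ⟨hr₁', hr₂'⟩ := hr'
  rw [div_le_iff₀ (by positivity)]
  nlinarith [mul_nonneg (sub_nonneg.2 hr₁) (sub_nonneg.2 hr₂),
    mul_nonneg (sub_nonneg.2 hr₁') (sub_nonneg.2 hr₂'),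
    mul_nonneg (sub_nonneg.2 hr₂) (sub_nonneg.2 hr₁'),
    mul_nonneg (sub_nonneg.2 hr₁) (sub_nonneg.2 hr₂'),
    mul_nonneg (sub_nonneg.2 hr₁) (sub_nonneg.2 hr₁'),
    mul_nonneg (sub_nonneg.2 hr₂) (sub_nonneg.2 hr₂')]

/-- Impossible: one point Y with p ≤ |Y| ≤ 1.88 and nine points Xᵢ with
1 ≤ |Xᵢ| ≤ 1.21, pairwise X-distances ≥ q = 1/p and dist(Y, Xᵢ) ≥ p = 1.409. -/
theorem stmt_9 (Y : EuclideanSpace ℝ (Fin 2)) (X : Fin 9 → EuclideanSpace ℝ (Fin 2))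
    (hY : (1.409 : ℝ) ≤ ‖Y‖ ∧ ‖Y‖ ≤ 1.88)
    (hX : ∀ i, (1 : ℝ) ≤ ‖X i‖ ∧ ‖X i‖ ≤ 1.21)
    (hXX : ∀ i j, i ≠ j → (1 / 1.409 : ℝ) ≤ dist (X i) (X j))
    (hYX : ∀ i, (1.409 : ℝ) ≤ dist Y (X i)) : False := by
  have : Fact (Module.finrank ℝ (EuclideanSpace ℝ (Fin 2)) = 2) := ⟨finrank_euclideanSpace_fin⟩
  have hY₀ : Y ≠ 0 := norm_ne_zero_iff.1 (by linarith [hY.1])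
  have hX₀ : ∀ i, X i ≠ 0 := fun i => norm_ne_zero_iff.1 (by linarith [(hX i).1])
  have htotal := two_mul_add_mul_le_two_pi_of_cos_angle_le (α := 0.8) (β := 0.5865) hY₀ hX₀
    (by linarith [pi_gt_three]) (by linarith [pi_gt_three]) (fun i => ?_) (fun i j hij => ?_)
  · norm_num at htotal
    linarith [pi_lt_d4]
  · calc cos (angle Y (X i))
        ≤ (‖Y‖ ^ 2 + ‖X i‖ ^ 2 - 1.409 ^ 2) / (2 * ‖Y‖ * ‖X i‖) :=
          cos_angle_le_of_le_norm_sub hY₀ (hX₀ i) (by norm_num) (dist_eq_norm Y (X i) ▸ hYX i)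
      _ ≤ 1 - 0.8 ^ 2 / 2 := cosine_bound_Y_X hY (hX i)
      _ ≤ cos 0.8 := one_sub_sq_div_two_le_cos
  · calc cos (angle (X i) (X j))
        ≤ (‖X i‖ ^ 2 + ‖X j‖ ^ 2 - (1 / 1.409) ^ 2) / (2 * ‖X i‖ * ‖X j‖) :=
          cos_angle_le_of_le_norm_sub (hX₀ i) (hX₀ j) (by norm_num)
            (dist_eq_norm (X i) (X j) ▸ hXX i j hij)
      _ ≤ 1 - 0.5865 ^ 2 / 2 := cosine_bound_X_X (hX i) (hX j)
      _ ≤ cos 0.5865 := one_sub_sq_div_two_le_cos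
end

section
/- Let p = 1.409, q = 1/p. There is no configuration consisting of one point Y with p ≤ |Y| ≤ 1.59 and nine points X₁, …, X₉ with 1 ≤ |Xᵢ| ≤ 1.2931, such that dist(Xᵢ, Xⱼ) ≥ q for all i ≠ j and dist(Y, Xᵢ) ≥ p for all i. -/
/-!
Project the ten points radially onto the circle `ℝ / 2πℤ` by `z ↦ arg z`. The law of cosines
turns the constraints on norms and distances into lower bounds on angles: `0.546` between two
`Xᵢ`, `0.96` between `Y` and an `Xᵢ`. Hence the closed arcs of radius `0.273` around the `Xᵢ` and
of radius `0.687` around `Y` are pairwise disjoint, yet their total length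
`9 · 0.546 + 2 · 0.687 = 6.288` exceeds `2π`.
-/

open Real InnerProductGeometry MeasureTheory Function

theorem InnerProductGeometry.lt_angle_of_le_norm_sub {V : Type*} [NormedAddCommGroup V]
    [InnerProductSpace ℝ V] {x y : V} {A d : ℝ} (hAπ : A ≤ π) (hd₀ : 0 ≤ d)
    (hd : d ≤ ‖x - y‖) (h : ‖x‖ ^ 2 + ‖y‖ ^ 2 - d ^ 2 < 2 * ‖x‖ * ‖y‖ * cos A) :
    A < angle x y := by
  have hlaw := norm_sub_sq_eq_norm_sq_add_norm_sq_sub_two_mul_norm_mul_norm_mul_cos_angle x y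
  have hcos : cos (angle x y) < cos A := by
    by_contra! hle
    nlinarith [mul_nonneg (mul_nonneg (norm_nonneg x) (norm_nonneg y)) (sub_nonneg.2 hle),
      mul_self_le_mul_self hd₀ hd]
  by_contra! hle
  exact hcos.not_ge (cos_le_cos_of_nonneg_of_le_pi (angle_nonneg x y) hAπ hle)

theorem Complex.dist_coe_arg_eq_angle {z w : ℂ} (hz : z ≠ 0) (hw : w ≠ 0) :
    dist (z.arg : AddCircle (2 * π)) (w.arg : AddCircle (2 * π)) = angle z w := by
  have hsub : ((z.arg : AddCircle (2 * π)) - w.arg) = ((z / w).arg : AddCircle (2 * π)) :=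
    (Complex.arg_div_coe_angle hz hw).symm
  rw [dist_eq_norm, hsub, angle_eq_abs_arg hz hw,
    AddCircle.norm_coe_eq_abs_iff (p := 2 * π) two_pi_pos.ne', abs_of_pos two_pi_pos]
  linarith [abs_arg_le_pi (z / w)]

theorem AddCircle.sum_two_mul_le_of_add_lt_dist {T : ℝ} [Fact (0 < T)] {ι : Type*} [Fintype ι]
    (c : ι → AddCircle T) (r : ι → ℝ) (hr₀ : ∀ i, 0 ≤ r i) (hrT : ∀ i, 2 * r i ≤ T)
    (hsep : Pairwise fun i j => r i + r j < dist (c i) (c j)) :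
    ∑ i, 2 * r i ≤ T := by
  have hdisj : Pairwise (Disjoint on fun i => Metric.closedBall (c i) (r i)) :=
    fun i j hij => Metric.closedBall_disjoint_closedBall (hsep hij)
  have hvol := measure_iUnion hdisj (fun i => Metric.isClosed_closedBall.measurableSet)
    ▸ measure_mono (μ := (volume : Measure (AddCircle T))) (Set.subset_univ _)
  simp only [tsum_fintype, AddCircle.volume_closedBall, min_eq_right (hrT _),
    AddCircle.measure_univ] at hvol
  rwa [← ENNReal.ofReal_sum_of_nonneg (fun i _ => by linarith [hr₀ i]),
    ENNReal.ofReal_le_ofReal_iff (Fact.out : 0 < T).le] at hvol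

theorem Complex.sum_two_mul_le_two_pi_of_add_lt_angle {ι : Type*} [Fintype ι] (z : ι → ℂ)
    (hz : ∀ i, z i ≠ 0) (r : ι → ℝ) (hr₀ : ∀ i, 0 ≤ r i) (hrπ : ∀ i, r i ≤ π)
    (hsep : Pairwise fun i j => r i + r j < angle (z i) (z j)) :
    ∑ i, 2 * r i ≤ 2 * π := by
  have : Fact (0 < 2 * π) := ⟨two_pi_pos⟩
  refine AddCircle.sum_two_mul_le_of_add_lt_dist (fun i => ((z i).arg : AddCircle (2 * π))) r
    hr₀ (fun i => by linarith [hrπ i]) fun i j hij => ?_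
  simpa only [Complex.dist_coe_arg_eq_angle (hz i) (hz j)] using hsep hij

section NumericBounds

variable {V : Type*} [NormedAddCommGroup V] [InnerProductSpace ℝ V] {x y : V}

theorem lt_angle_of_near_pair (hx : 1 ≤ ‖x‖ ∧ ‖x‖ ≤ 1.2931) (hy : 1 ≤ ‖y‖ ∧ ‖y‖ ≤ 1.2931)
    (hxy : 1 / 1.409 ≤ dist x y) : 0.546 < angle x y := by
  refine lt_angle_of_le_norm_sub (by linarith [pi_gt_three]) (by norm_num)
    (dist_eq_norm x y ▸ hxy)
    (lt_of_lt_of_le ?_ (mul_le_mul_of_nonneg_left (one_sub_sq_div_two_le_cos (x := 0.546))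
      (by positivity)))
  obtain ⟨hx₁, hx₂⟩ := hx
  obtain ⟨hy₁, hy₂⟩ := hy
  nlinarith [mul_nonneg (sub_nonneg.2 hx₁) (sub_nonneg.2 hy₂),
    mul_nonneg (sub_nonneg.2 hx₂) (sub_nonneg.2 hy₁),
    mul_nonneg (sub_nonneg.2 hx₁) (sub_nonneg.2 hy₁),
    mul_nonneg (sub_nonneg.2 hx₂) (sub_nonneg.2 hy₂)]

theorem lt_angle_of_far_near_pair (hx : 1.409 ≤ ‖x‖ ∧ ‖x‖ ≤ 1.59)
    (hy : 1 ≤ ‖y‖ ∧ ‖y‖ ≤ 1.2931) (hxy : 1.409 ≤ dist x y) : 0.96 < angle x y := by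
  refine lt_angle_of_le_norm_sub (by linarith [pi_gt_three]) (by norm_num)
    (dist_eq_norm x y ▸ hxy)
    (lt_of_lt_of_le ?_ (mul_le_mul_of_nonneg_left (one_sub_sq_div_two_le_cos (x := 0.96))
      (by positivity)))
  obtain ⟨hx₁, hx₂⟩ := hx
  obtain ⟨hy₁, hy₂⟩ := hy
  nlinarith [mul_nonneg (sub_nonneg.2 hx₁) (sub_nonneg.2 hy₂),
    mul_nonneg (sub_nonneg.2 hx₂) (sub_nonneg.2 hy₁),
    mul_nonneg (sub_nonneg.2 hx₁) (sub_nonneg.2 hy₁),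
    mul_nonneg (sub_nonneg.2 hx₂) (sub_nonneg.2 hy₂)]

end NumericBounds

/-- Impossible: one point Y with p ≤ |Y| ≤ 1.59 and nine points Xᵢ with
1 ≤ |Xᵢ| ≤ 1.2931, pairwise X-distances ≥ q = 1/p and dist(Y, Xᵢ) ≥ p = 1.409. -/
theorem stmt_11 (Y : EuclideanSpace ℝ (Fin 2)) (X : Fin 9 → EuclideanSpace ℝ (Fin 2))
    (hY : (1.409 : ℝ) ≤ ‖Y‖ ∧ ‖Y‖ ≤ 1.59)
    (hX : ∀ i, (1 : ℝ) ≤ ‖X i‖ ∧ ‖X i‖ ≤ 1.2931)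
    (hXX : ∀ i j, i ≠ j → (1 / 1.409 : ℝ) ≤ dist (X i) (X j))
    (hYX : ∀ i, (1.409 : ℝ) ≤ dist Y (X i)) : False := by
  let e := Complex.orthonormalBasisOneI.repr.symm
  let P : Option (Fin 9) → EuclideanSpace ℝ (Fin 2) := fun o => o.elim Y X
  let r : Option (Fin 9) → ℝ := fun o => o.elim 0.687 fun _ => 0.273
  have hP : ∀ o, e (P o) ≠ 0
    | none => e.map_ne_zero_iff.2 (norm_pos_iff.1 (hY.1.trans_lt' (by norm_num)))
    | some i => e.map_ne_zero_iff.2 (norm_pos_iff.1 ((hX i).1.trans_lt' one_pos))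
  have hsep : Pairwise fun i j => r i + r j < angle (P i) (P j) := by
    rintro (_ | i) (_ | j) hij <;> simp only [r, P, Option.elim]
    · exact (hij rfl).elim
    · exact (lt_angle_of_far_near_pair hY (hX j) (hYX j)).trans_le' (by norm_num)
    · rw [angle_comm]
      exact (lt_angle_of_far_near_pair hY (hX i) (hYX i)).trans_le' (by norm_num)
    · exact (lt_angle_of_near_pair (hX i) (hX j)
        (hXX i j (hij <| congrArg some ·))).trans_le' (by norm_num)
  have hsum := Complex.sum_two_mul_le_two_pi_of_add_lt_angle (e ∘ P) hP r
    (by rintro (_ | _) <;> norm_num [r])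
    (by rintro (_ | _) <;> norm_num [r] <;> linarith [pi_gt_three])
    fun i j hij => (hsep hij).trans_eq (e.toLinearIsometry.angle_map _ _).symm
  norm_num [Fintype.sum_option, r] at hsum
  linarith [pi_lt_d4]
end

section
/- Let q = 1/1.409. There do not exist 11 points X₁, …, X₁₁ in the plane with pairwise distances at least q such that all satisfy 1 ≤ |Xᵢ| ≤ 1.29 and at least 9 of them satisfy |Xᵢ| ≤ 1.21. -/
/-!
Sort the points by argument. Two points at distance at least `q` whose moduli lie in `[r, R]`
subtend an angle at least `q / R` at the origin, provided `R (R - r) ≤ q²`, so the `11` cyclic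
gaps between consecutive arguments, which add up to `2π`, are at least `q / 1.21` for a pair of
points of modulus at most `1.21` and at least `q / 1.29` otherwise. At most two points have
modulus above `1.21`, so at most four gaps are of the second kind, and `7 q / 1.21 + 4 q / 1.29 ≈ 6.306 > 2π`.
-/

open Real Complex Finset

lemma Complex.norm_sub_sq_eq_law_of_cosines (z w : ℂ) :
    ‖z - w‖ ^ 2 = ‖z‖ ^ 2 + ‖w‖ ^ 2 - 2 * ‖z‖ * ‖w‖ * Real.cos (arg z - arg w) := by
  have hre := norm_mul_cos_arg z
  have him := norm_mul_sin_arg z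
  have hre' := norm_mul_cos_arg w
  have him' := norm_mul_sin_arg w
  rw [Real.cos_sub, Complex.sq_norm, Complex.sq_norm, Complex.sq_norm, normSq_apply, normSq_apply,
    normSq_apply]
  simp only [sub_re, sub_im]
  linear_combination 2 * (‖w‖ * Real.cos (arg w)) * hre + 2 * z.re * hre'
    + 2 * (‖w‖ * Real.sin (arg w)) * him + 2 * z.im * him'

lemma sub_sq_mul_sq_add_sq_mul_le {r R q a b : ℝ} (hr : 0 ≤ r) (ha : a ∈ Set.Icc r R)
    (hb : b ∈ Set.Icc r R) (hRq : R * (R - r) ≤ q ^ 2) :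
    (a - b) ^ 2 * R ^ 2 + q ^ 2 * (a * b) ≤ q ^ 2 * R ^ 2 := by
  wlog hab : a ≤ b generalizing a b
  · convert this hb ha (le_of_not_ge hab) using 2 <;> ring
  obtain ⟨har, haR⟩ := ha
  obtain ⟨hbr, hbR⟩ := hb
  have hR : 0 ≤ R := hr.trans (har.trans haR)
  calc (a - b) ^ 2 * R ^ 2 + q ^ 2 * (a * b)
      ≤ (b - a) * (R * (R - r)) * R + q ^ 2 * (a * b) := by
        have : (b - a) ^ 2 ≤ (b - a) * (R - r) := by nlinarith
        nlinarith [mul_le_mul_of_nonneg_right this (sq_nonneg R)]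
    _ ≤ (b - a) * q ^ 2 * R + q ^ 2 * (a * b) := by gcongr
    _ ≤ q ^ 2 * R ^ 2 := by
        nlinarith [mul_nonneg (sub_nonneg.2 hbR) (add_nonneg hR (hr.trans har)), sq_nonneg q]

lemma cos_arg_sub_arg_le_cos_div {r R q : ℝ} {z w : ℂ} (hr : 0 < r) (hz : ‖z‖ ∈ Set.Icc r R)
    (hw : ‖w‖ ∈ Set.Icc r R) (hRq : R * (R - r) ≤ q ^ 2) (hq : 0 ≤ q) (hzw : q ≤ dist z w) :
    Real.cos (arg z - arg w) ≤ Real.cos (q / R) := by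
  have hz0 : 0 < ‖z‖ := hr.trans_le hz.1
  have hw0 : 0 < ‖w‖ := hr.trans_le hw.1
  have hR : 0 < R := hz0.trans_le hz.2
  have hchord : q ^ 2 ≤ ‖z‖ ^ 2 + ‖w‖ ^ 2 - 2 * ‖z‖ * ‖w‖ * Real.cos (arg z - arg w) := by
    rw [← norm_sub_sq_eq_law_of_cosines, ← Complex.dist_eq]
    gcongr
  have hpoly := sub_sq_mul_sq_add_sq_mul_le hr.le hz hw hRq
  refine le_trans ?_ (one_sub_sq_div_two_le_cos (x := q / R))
  rw [div_pow, ← sub_nonneg]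
  -- `hchord` bounds `2 ‖z‖ ‖w‖ cos` by `‖z‖² + ‖w‖² - q²`, and `hpoly` bounds that by the target.
  have key : 0 ≤ (1 - q ^ 2 / R ^ 2 / 2 - Real.cos (arg z - arg w)) * (2 * ‖z‖ * ‖w‖ * R ^ 2) := by
    field_simp
    nlinarith
  exact nonneg_of_mul_nonneg_left key (by positivity)

lemma Real.le_of_cos_le_cos {φ t : ℝ} (hφ : φ ≤ π) (ht : 0 ≤ t) (h : Real.cos t ≤ Real.cos φ) :
    φ ≤ t := by
  by_contra! htφ
  exact (Real.cos_lt_cos_of_nonneg_of_le_pi ht hφ htφ).not_ge h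

lemma Fin.sum_sub_add_one_eq_zero {n : ℕ} (θ : Fin (n + 1) → ℝ) :
    ∑ k, (θ (k + 1) - θ k) = 0 := by
  rw [Finset.sum_sub_distrib, sub_eq_zero]
  exact Fintype.sum_equiv (Equiv.addRight 1) _ _ fun _ => rfl

lemma sum_le_two_pi_of_cos_le {n : ℕ} {θ w : Fin (n + 1) → ℝ} (hθ : Monotone θ)
    (hspan : θ (Fin.last n) - θ 0 ≤ 2 * π) (hw : ∀ k, w k ≤ π)
    (hcos : ∀ k, Real.cos (θ (k + 1) - θ k) ≤ Real.cos (w k)) :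
    ∑ k, w k ≤ 2 * π := by
  -- the gap after the last point wraps around the circle
  set gap : Fin (n + 1) → ℝ := fun k => θ (k + 1) - θ k + if k = Fin.last n then 2 * π else 0
  have hgap : ∀ k, 0 ≤ gap k ∧ Real.cos (gap k) = Real.cos (θ (k + 1) - θ k) := by
    intro k
    by_cases hk : k = Fin.last n
    · subst hk
      simp only [gap, Fin.last_add_one, if_true]
      exact ⟨by linarith, Real.cos_add_two_pi _⟩
    · have : k ≤ k + 1 := (Fin.lt_add_one_iff.2 (Fin.lt_last_iff_ne_last.2 hk)).le
      simp only [gap, if_neg hk, add_zero, and_true]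
      exact sub_nonneg.2 (hθ this)
  calc ∑ k, w k ≤ ∑ k, gap k :=
        Finset.sum_le_sum fun k _ =>
          le_of_cos_le_cos (hw k) (hgap k).1 ((hgap k).2.trans_le (hcos k))
    _ = 2 * π := by
        rw [Finset.sum_add_distrib, Fin.sum_sub_add_one_eq_zero, Finset.sum_ite_eq']
        simp

lemma card_filter_not_and_mem_le {α β : Type*} [Fintype α] [DecidableEq α] [Fintype β]
    [DecidableEq β] {f g : α → β} (hf : Function.Injective f) (hg : Function.Injective g)
    (S : Finset β) :
    #{a | ¬(f a ∈ S ∧ g a ∈ S)} ≤ 2 * #Sᶜ := by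
  have hpre : ∀ h : α → β, Function.Injective h → #{a | h a ∉ S} ≤ #Sᶜ := fun h hh =>
    Finset.card_le_card_of_injOn h (fun a ha => by simpa using ha) hh.injOn
  calc #{a | ¬(f a ∈ S ∧ g a ∈ S)}
        = #(({a | f a ∉ S} : Finset α) ∪ ({a | g a ∉ S} : Finset α)) := by
        rw [← Finset.filter_or]; simp only [not_and_or]
    _ ≤ #{a | f a ∉ S} + #{a | g a ∉ S} := Finset.card_union_le _ _
    _ ≤ 2 * #Sᶜ := by linarith [hpre f hf, hpre g hg]

lemma card_mul_sub_le_sum_ite {ι : Type*} [Fintype ι] (p : ι → Prop) [DecidablePred p]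
    {a b : ℝ} {m : ℕ} (hab : b ≤ a) (hm : #{i | ¬p i} ≤ m) :
    Fintype.card ι * a - m * (a - b) ≤ ∑ i, if p i then a else b := by
  rw [Finset.sum_ite, Finset.sum_const, Finset.sum_const, nsmul_eq_mul, nsmul_eq_mul,
    ← Finset.card_univ, ← Finset.card_filter_add_card_filter_not (s := Finset.univ) p]
  have hm' : (#{i | ¬p i} : ℝ) ≤ m := by exact_mod_cast hm
  push_cast
  nlinarith [mul_le_mul_of_nonneg_right hm' (sub_nonneg.2 hab)]

lemma false_of_eleven_separated_points_in_annulus (z : Fin 11 → ℂ) (S : Finset (Fin 11))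
    (hS : 9 ≤ #S) (hz : ∀ i, ‖z i‖ ∈ Set.Icc (1 : ℝ) 1.29) (hzS : ∀ i ∈ S, ‖z i‖ ≤ 1.21)
    (hdist : Pairwise fun i j => (1 / 1.409 : ℝ) ≤ dist (z i) (z j)) : False := by
  set σ := Tuple.sort (arg ∘ z)
  set w : Fin 11 → ℝ := fun k =>
    if σ k ∈ S ∧ σ (k + 1) ∈ S then 1 / 1.409 / 1.21 else 1 / 1.409 / 1.29
  have hcos : ∀ k, Real.cos (arg (z (σ (k + 1))) - arg (z (σ k))) ≤ Real.cos (w k) := by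
    intro k
    have hne : σ (k + 1) ≠ σ k := σ.injective.ne (by simp)
    by_cases hk : σ k ∈ S ∧ σ (k + 1) ∈ S
    · simp only [w, if_pos hk]
      exact cos_arg_sub_arg_le_cos_div one_pos ⟨(hz _).1, hzS _ hk.2⟩ ⟨(hz _).1, hzS _ hk.1⟩
        (by norm_num) (by norm_num) (hdist hne)
    · simp only [w, if_neg hk]
      exact cos_arg_sub_arg_le_cos_div one_pos (hz _) (hz _) (by norm_num) (by norm_num) (hdist hne)
  have hsum_le : ∑ k, w k ≤ 2 * π := by
    refine sum_le_two_pi_of_cos_le (θ := fun k => arg (z (σ k)))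
      (Tuple.monotone_sort (arg ∘ z)) ?_ (fun k => ?_) hcos
    · linarith [arg_le_pi (z (σ (Fin.last 10))), neg_pi_lt_arg (z (σ 0))]
    · simp only [w]; split_ifs <;> linarith [pi_gt_three]
  have hbad : #{k | ¬(σ k ∈ S ∧ σ (k + 1) ∈ S)} ≤ 4 := by
    have := card_filter_not_and_mem_le (f := σ) (g := fun k => σ (k + 1)) σ.injective
      (σ.injective.comp (add_left_injective 1)) S
    rw [card_compl, Fintype.card_fin] at this
    omega
  have hsum_ge :
      11 * (1 / 1.409 / 1.21) - 4 * (1 / 1.409 / 1.21 - 1 / 1.409 / 1.29) ≤ ∑ k, w k := by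
    simpa [w] using card_mul_sub_le_sum_ite _ (a := 1 / 1.409 / 1.21) (b := 1 / 1.409 / 1.29)
      (by norm_num) hbad
  linarith [pi_lt_d2]

/-- Impossible: 11 points with pairwise distances ≥ q = 1/1.409, all in
1 ≤ ρ ≤ 1.29, at least 9 of them in 1 ≤ ρ ≤ 1.21. -/
theorem stmt_12 :
    ¬ ∃ X : Fin 11 → EuclideanSpace ℝ (Fin 2),
      Function.Injective X ∧
      (∀ i, (1 : ℝ) ≤ ‖X i‖ ∧ ‖X i‖ ≤ 1.29) ∧
      (∃ S : Finset (Fin 11), 9 ≤ S.card ∧ ∀ i ∈ S, ‖X i‖ ≤ 1.21) ∧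
      (∀ i j, i ≠ j → (1 / 1.409 : ℝ) ≤ dist (X i) (X j)) := by
  rintro ⟨X, -, hX, ⟨S, hS, hXS⟩, hdist⟩
  refine false_of_eleven_separated_points_in_annulus (Complex.orthonormalBasisOneI.repr.symm ∘ X)
    S hS (fun i => ?_) (fun i hi => ?_)
    (fun i j hij => ?_)
  · simpa only [Function.comp_apply, LinearIsometryEquiv.norm_map, Set.mem_Icc] using hX i
  · simpa only [Function.comp_apply, LinearIsometryEquiv.norm_map] using hXS i hi
  · simpa only [Function.comp_apply, LinearIsometryEquiv.dist_map] using hdist i j hij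
end

section
/- Let q = 1/1.409. There do not exist 10 points in the plane with pairwise distances at least q such that all lie in 1 ≤ |P| ≤ 1.2571, at least 9 lie in 1 ≤ |P| ≤ 1.1513, at least 8 lie in 1 ≤ |P| ≤ 1.1254, at least 7 lie in 1 ≤ |P| ≤ 1.1138, and at least 6 lie in 1 ≤ |P| ≤ 1.1072. -/
/-!
Give a point at radius `r` the weight `angularWeight r`, larger for points in thinner annuli.
For two points at distance at least `q = 1/1.409` with radii in `[1, u]` and `[1, v]`, the law
of cosines bounds the cosine of the angle they subtend at `O` by its value at a corner of the
box `[1, u] × [1, v]`; checking the corners against the bound `cos s ≥ 1 - s²/2 + s⁴/32` shows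
that this angle is at least the sum of the two weights. Sorting the points by argument, the
angles between cyclically consecutive points add up to `2π`, so the weights add up to at most
`π`. The counting hypotheses, however, force the weights to add up to at least `3.151 > π`.
-/

open Real Set InnerProductGeometry

lemma sq_sub_mul_le_max_of_mem_Icc {a b t β : ℝ} (ht : t ∈ Icc a b) :
    t ^ 2 - β * t ≤ max (a ^ 2 - β * a) (b ^ 2 - β * b) := by
  rcases le_or_gt (t + a) β with h | h
  · exact le_max_of_le_left (by nlinarith [ht.1])
  · have hsum : 0 ≤ b + t - β := by linarith [ht.1, ht.2]
    exact le_max_of_le_right (by nlinarith [mul_nonneg (sub_nonneg.2 ht.2) hsum])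

lemma sq_add_sq_sub_le_of_corners {a₁ a₂ b₁ b₂ x y c K : ℝ} (hx : x ∈ Icc a₁ a₂)
    (hy : y ∈ Icc b₁ b₂)
    (hcorner : ∀ a ∈ ({a₁, a₂} : Set ℝ), ∀ b ∈ ({b₁, b₂} : Set ℝ),
      a ^ 2 + b ^ 2 - 2 * c * a * b ≤ K) :
    x ^ 2 + y ^ 2 - 2 * c * x * y ≤ K := by
  have edge : ∀ a ∈ ({a₁, a₂} : Set ℝ), a ^ 2 + y ^ 2 - 2 * c * a * y ≤ K := fun a ha ↦ by
    have := sq_sub_mul_le_max_of_mem_Icc (β := 2 * c * a) hy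
    have := hcorner a ha b₁ (by simp)
    have := hcorner a ha b₂ (by simp)
    grind
  have := sq_sub_mul_le_max_of_mem_Icc (β := 2 * c * y) hx
  have := edge a₁ (by simp)
  have := edge a₂ (by simp)
  grind

lemma Real.one_sub_sq_div_two_add_pow_four_div_le_cos {s : ℝ} (hs : s ^ 2 ≤ 8) :
    1 - s ^ 2 / 2 + s ^ 4 / 32 ≤ cos s := by
  have hhalf : 1 - (s / 2) ^ 2 / 2 ≤ cos (s / 2) := one_sub_sq_div_two_le_cos
  have hdouble : cos s = 2 * cos (s / 2) ^ 2 - 1 := by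
    rw [← cos_two_mul, mul_div_cancel₀ _ two_ne_zero]
  nlinarith [pow_le_pow_left₀ (by nlinarith) hhalf 2]

lemma InnerProductGeometry.le_angle_of_sq_le_norm_sub_sq {E : Type*} [NormedAddCommGroup E]
    [InnerProductSpace ℝ E] {x y : E} {s : ℝ} (hx : x ≠ 0) (hy : y ≠ 0) (hsπ : s ≤ π)
    (h : ‖x‖ ^ 2 + ‖y‖ ^ 2 - 2 * cos s * ‖x‖ * ‖y‖ ≤ ‖x - y‖ ^ 2) : s ≤ angle x y := by
  have hcos : cos (angle x y) ≤ cos s := by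
    have := cos_angle_mul_norm_mul_norm x y
    have := norm_sub_sq_real x y
    have : 0 < ‖x‖ * ‖y‖ := by positivity
    nlinarith
  by_contra! hlt
  exact (cos_lt_cos_of_nonneg_of_le_pi (angle_nonneg x y) hsπ hlt).not_ge hcos

lemma Complex.angle_eq_min_abs_arg_sub {z w : ℂ} (hz : z ≠ 0) (hw : w ≠ 0) :
    angle z w = min |z.arg - w.arg| (2 * π - |z.arg - w.arg|) := by
  have hcos : Real.cos (angle z w) = Real.cos |z.arg - w.arg| := by
    rw [Real.cos_abs, cos_angle, Real.cos_sub, cos_arg hz, cos_arg hw, sin_arg, sin_arg,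
      Complex.inner]
    simp only [mul_re, conj_re, conj_im]
    field_simp
    ring
  have hd : |z.arg - w.arg| < 2 * π := abs_sub_lt_iff.2
    ⟨by linarith [neg_pi_lt_arg w, arg_le_pi z], by linarith [neg_pi_lt_arg z, arg_le_pi w]⟩
  refine injOn_cos ⟨angle_nonneg z w, angle_le_pi z w⟩ ⟨?_, ?_⟩ ?_
  · exact le_min (abs_nonneg _) (by linarith)
  · rcases le_total |z.arg - w.arg| π with h | h
    · exact min_le_of_left_le h
    · exact min_le_of_right_le (by linarith)
  · rw [hcos]
    rcases min_choice |z.arg - w.arg| (2 * π - |z.arg - w.arg|) with h | h <;> rw [h]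
    rw [Real.cos_two_pi_sub]

lemma two_mul_sum_le_of_add_le_min_abs_sub {m : ℕ} (θ w : Fin (m + 2) → ℝ) (L : ℝ)
    (h : ∀ i j, i ≠ j → w i + w j ≤ min |θ i - θ j| (L - |θ i - θ j|)) :
    2 * ∑ i, w i ≤ L := by
  set σ := Tuple.sort θ
  have hmono := Tuple.monotone_sort θ
  have gap : ∀ a b, a ≠ b → a ≤ b →
      w (σ a) + w (σ b) ≤ min (θ (σ b) - θ (σ a)) (L - (θ (σ b) - θ (σ a))) := by
    intro a b hab hle
    have := h (σ a) (σ b) (σ.injective.ne hab)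
    have hθ : θ (σ a) ≤ θ (σ b) := hmono hle
    rwa [abs_sub_comm, abs_of_nonneg (sub_nonneg.2 hθ)] at this
  have hsteps : ∑ k : Fin (m + 1), (w (σ k.castSucc) + w (σ k.succ)) ≤
      ∑ k : Fin (m + 1), (θ (σ k.succ) - θ (σ k.castSucc)) :=
    Finset.sum_le_sum fun k _ ↦ (gap _ _ (Fin.castSucc_lt_succ (i := k)).ne
      (Fin.castSucc_lt_succ (i := k)).le).trans (min_le_left _ _)
  have hwrap := (gap 0 (Fin.last _) (Fin.last_pos.ne) (Fin.zero_le _)).trans (min_le_right _ _)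
  have hσ : ∑ i, w i = ∑ i, w (σ i) := (Equiv.sum_comp σ w).symm
  rw [Finset.sum_add_distrib, Finset.sum_sub_distrib] at hsteps
  have h₁ := Fin.sum_univ_succ (fun i ↦ w (σ i))
  have h₂ := Fin.sum_univ_castSucc (fun i ↦ w (σ i))
  have h₃ := Fin.sum_univ_succ (fun i ↦ θ (σ i))
  have h₄ := Fin.sum_univ_castSucc (fun i ↦ θ (σ i))
  linarith

lemma Complex.sum_le_pi_of_add_le_angle {m : ℕ} (z : Fin (m + 2) → ℂ) (hz : ∀ i, z i ≠ 0)
    (w : Fin (m + 2) → ℝ) (h : ∀ i j, i ≠ j → w i + w j ≤ angle (z i) (z j)) :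
    ∑ i, w i ≤ π := by
  have := two_mul_sum_le_of_add_le_min_abs_sub (fun i ↦ (z i).arg) w (2 * π) fun i j hij ↦ by
    rw [← angle_eq_min_abs_arg_sub (hz i) (hz j)]
    exact h i j hij
  linarith

/-- Written as a sum of increments, so that summing over a configuration counts its points in
each annulus. -/
noncomputable def angularWeight (r : ℝ) : ℝ :=
  0.2677 + (if r ≤ 1.1513 then 0.0409 else 0) + (if r ≤ 1.1254 then 0.0085 else 0) +
    (if r ≤ 1.1138 then 0.0037 else 0) + (if r ≤ 1.1072 then 0.0020 else 0)

def radiusTiers : List (ℝ × ℝ) :=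
  [(1.2571, 0.2677), (1.1513, 0.3086), (1.1254, 0.3171), (1.1138, 0.3208), (1.1072, 0.3228)]

lemma exists_mem_radiusTiers {r : ℝ} (hr : r ≤ 1.2571) :
    ∃ t ∈ radiusTiers, r ≤ t.1 ∧ angularWeight r = t.2 := by
  unfold angularWeight
  split_ifs <;> norm_num [radiusTiers] <;> linarith

lemma radiusTiers_corners : ∀ t ∈ radiusTiers, ∀ t' ∈ radiusTiers,
    t.2 + t'.2 ∈ Icc 0 1 ∧ ∀ a ∈ ({1, t.1} : Set ℝ), ∀ b ∈ ({1, t'.1} : Set ℝ),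
      a ^ 2 + b ^ 2 - 2 * (1 - (t.2 + t'.2) ^ 2 / 2 + (t.2 + t'.2) ^ 4 / 32) * a * b ≤
        (1 / 1.409) ^ 2 := by
  simp only [radiusTiers, List.mem_cons, List.not_mem_nil, or_false, forall_eq_or_imp,
    forall_eq, Set.mem_insert_iff, Set.mem_singleton_iff, mem_Icc]
  norm_num

lemma angularWeight_add_le_angle {E : Type*} [NormedAddCommGroup E] [InnerProductSpace ℝ E]
    {x y : E} (hx : ‖x‖ ∈ Icc 1 1.2571) (hy : ‖y‖ ∈ Icc 1 1.2571) (hxy : 1 / 1.409 ≤ ‖x - y‖) :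
    angularWeight ‖x‖ + angularWeight ‖y‖ ≤ angle x y := by
  obtain ⟨t, ht, hxt, hwx⟩ := exists_mem_radiusTiers hx.2
  obtain ⟨t', ht', hyt, hwy⟩ := exists_mem_radiusTiers hy.2
  obtain ⟨⟨hs₀, hs₁⟩, hcorner⟩ := radiusTiers_corners t ht t' ht'
  have hcos := one_sub_sq_div_two_add_pow_four_div_le_cos (s := t.2 + t'.2) (by nlinarith)
  have hbox := sq_add_sq_sub_le_of_corners ⟨hx.1, hxt⟩ ⟨hy.1, hyt⟩ hcorner
  have hx₀ : 0 < ‖x‖ := one_pos.trans_le hx.1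
  have hy₀ : 0 < ‖y‖ := one_pos.trans_le hy.1
  rw [hwx, hwy]
  refine le_angle_of_sq_le_norm_sub_sq (norm_pos_iff.1 hx₀) (norm_pos_iff.1 hy₀)
    (by linarith [pi_gt_three]) ?_
  nlinarith [pow_le_pow_left₀ (by norm_num) hxy 2, mul_pos hx₀ hy₀]

lemma card_mul_le_sum_ite {ι : Type*} [Fintype ι] {p : ι → Prop} [DecidablePred p]
    {S : Finset ι} (hS : ∀ i ∈ S, p i) {c : ℝ} (hc : 0 ≤ c) :
    S.card * c ≤ ∑ i, if p i then c else 0 := by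
  rw [Finset.sum_ite, Finset.sum_const_zero, add_zero, Finset.sum_const, nsmul_eq_mul]
  refine mul_le_mul_of_nonneg_right ?_ hc
  exact_mod_cast Finset.card_le_card fun i hi ↦
    Finset.mem_filter.2 ⟨Finset.mem_univ i, hS i hi⟩

lemma le_sum_angularWeight (r : Fin 10 → ℝ) {S₉ S₈ S₇ S₆ : Finset (Fin 10)}
    (hS₉ : 9 ≤ S₉.card) (hr₉ : ∀ i ∈ S₉, r i ≤ 1.1513)
    (hS₈ : 8 ≤ S₈.card) (hr₈ : ∀ i ∈ S₈, r i ≤ 1.1254)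
    (hS₇ : 7 ≤ S₇.card) (hr₇ : ∀ i ∈ S₇, r i ≤ 1.1138)
    (hS₆ : 6 ≤ S₆.card) (hr₆ : ∀ i ∈ S₆, r i ≤ 1.1072) :
    3.151 ≤ ∑ i, angularWeight (r i) := by
  simp only [angularWeight, Finset.sum_add_distrib, Finset.sum_const, Finset.card_univ,
    Fintype.card_fin, nsmul_eq_mul]
  have h₉ := card_mul_le_sum_ite hr₉ (c := 0.0409) (by norm_num)
  have h₈ := card_mul_le_sum_ite hr₈ (c := 0.0085) (by norm_num)
  have h₇ := card_mul_le_sum_ite hr₇ (c := 0.0037) (by norm_num)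
  have h₆ := card_mul_le_sum_ite hr₆ (c := 0.0020) (by norm_num)
  have : (9 : ℝ) ≤ S₉.card := by exact_mod_cast hS₉
  have : (8 : ℝ) ≤ S₈.card := by exact_mod_cast hS₈
  have : (7 : ℝ) ≤ S₇.card := by exact_mod_cast hS₇
  have : (6 : ℝ) ≤ S₆.card := by exact_mod_cast hS₆
  push_cast
  linarith

/-- Impossible: 10 points with pairwise distances ≥ q = 1/1.409, all in
1 ≤ ρ ≤ 1.2571, at least 9 in ρ ≤ 1.1513, at least 8 in ρ ≤ 1.1254,
at least 7 in ρ ≤ 1.1138, and at least 6 in ρ ≤ 1.1072. -/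
theorem stmt_14 :
    ¬ ∃ X : Fin 10 → EuclideanSpace ℝ (Fin 2),
      Function.Injective X ∧
      (∀ i, (1 : ℝ) ≤ ‖X i‖ ∧ ‖X i‖ ≤ 1.2571) ∧
      (∃ S : Finset (Fin 10), 9 ≤ S.card ∧ ∀ i ∈ S, ‖X i‖ ≤ 1.1513) ∧
      (∃ S : Finset (Fin 10), 8 ≤ S.card ∧ ∀ i ∈ S, ‖X i‖ ≤ 1.1254) ∧
      (∃ S : Finset (Fin 10), 7 ≤ S.card ∧ ∀ i ∈ S, ‖X i‖ ≤ 1.1138) ∧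
      (∃ S : Finset (Fin 10), 6 ≤ S.card ∧ ∀ i ∈ S, ‖X i‖ ≤ 1.1072) ∧
      (∀ i j, i ≠ j → (1 / 1.409 : ℝ) ≤ dist (X i) (X j)) := by
  rintro ⟨X, -, hX, ⟨S₉, hS₉, hX₉⟩, ⟨S₈, hS₈, hX₈⟩, ⟨S₇, hS₇, hX₇⟩, ⟨S₆, hS₆, hX₆⟩, hdist⟩
  let e := Complex.orthonormalBasisOneI.repr.symm
  have hsum_le : ∑ i, angularWeight ‖X i‖ ≤ π := by
    simp_rw [← e.norm_map]
    refine Complex.sum_le_pi_of_add_le_angle (fun i ↦ e (X i)) (fun i ↦ ?_) _ fun i j hij ↦ ?_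
    · rw [← norm_pos_iff, e.norm_map]
      linarith [(hX i).1]
    · refine angularWeight_add_le_angle (by rw [e.norm_map]; exact hX i)
        (by rw [e.norm_map]; exact hX j) ?_
      rw [← map_sub, e.norm_map, ← dist_eq_norm]
      exact hdist i j hij
  linarith [le_sum_angularWeight _ hS₉ hX₉ hS₈ hX₈ hS₇ hX₇ hS₆ hX₆, pi_lt_d6]
end
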